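/- arXiv:2408.12399 — 2 statements merged into one kernel-verified Lean document; each statement's English description precedes it below -/
import Mathlib

section
/- Let β > 0 and x* ∈ X*. Then x* ∈ Λ_A^{β+1} if and only if there exists y* ∈ X* with y* = A* x* in the mild sense (i.e. ⟨y*, T_t x⟩ = ⟨x*, (d/dt T_t)(x)⟩ for all x ∈ X and t > 0) and y* ∈ Λ_A^β. Moreover there is a constant C > 1, independent of x*, such that C^{−1} ‖x*‖_{Λ_A^{β+1}} ≤ ‖x*‖_{X*} + ‖A* x*‖_{Λ_A^β} ≤ C ‖x*‖_{Λ_A^{β+1}} for all such x*. -/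
/-!
Writing `Dⁿx*(t)` for the `n`-th derivative of the dual orbit `t ↦ x* ∘ T t`, a mild
`y* = A* x*` satisfies `Dⁿ⁺¹x* = Dⁿy*`, and the integer `m` attached to `β + 1` is the one
attached to `β` plus one; so `x* ∈ Λ^{β+1} ↔ y* ∈ Λ^β`, and
`‖x*‖ + ‖y*‖_{Λ^β} = ‖y*‖ + ‖x*‖_{Λ^{β+1}}`.

The substance is constructing `y*` and bounding `‖y*‖`. Fix `0 < α < 1` with `α ≤ β`.
Starting from `‖Dᵐ⁺¹x*(t)‖ ≤ S t^{β-m} ≤ S t^{α-m}` on `(0,1]` and integrating downwards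
with the mean value inequality gives `‖Dᵏx*(t)‖ ≲ ‖x*‖_{Λ^{β+1}} t^{α+1-k}` for `k ≥ 2`;
replacing `β` by the non-integer `α` keeps every exponent away from `-1`, so no logarithm
appears. For `k = 2` the bound is integrable at `0`, hence `D¹x*(t)` is Cauchy as `t → 0⁺`;
its limit is the mild `A* x*`, and strong continuity bounds its norm by `sup_{t ≤ 1} ‖D¹x*(t)‖`.
-/

open Filter Topology MeasureTheory Set

noncomputable section

variable {X : Type*} [NormedAddCommGroup X] [NormedSpace ℂ X] [CompleteSpace X]

/-- The `n`-th derivative on `(0,∞)` of the orbit `t ↦ x* ∘ T t` of the dual semigroup. -/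
def dualDeriv (T : ℝ → X →L[ℂ] X) (n : ℕ) (xs : X →L[ℂ] ℂ) (t : ℝ) : X →L[ℂ] ℂ :=
  iteratedDerivWithin n (fun s => xs.comp (T s)) (Set.Ioi 0) t

/-- A uniformly bounded, strongly continuous holomorphic semigroup on `(0,∞)`,
together with the standard properties of its time derivatives. -/
structure IsHoloSG (T : ℝ → X →L[ℂ] X) : Prop where
  semigroup : ∀ s t : ℝ, 0 < s → 0 < t → T (s + t) = (T s).comp (T t)
  strong : ∀ x : X, Tendsto (fun t => T t x) (𝓝[>] (0:ℝ)) (𝓝 x)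
  bounded : ∃ M : ℝ, ∀ t : ℝ, 0 < t → ‖T t‖ ≤ M
  smooth : ContDiffOn ℝ (⊤ : ℕ∞) T (Set.Ioi 0)
  derivComp : ∀ n : ℕ, ∀ s t : ℝ, 0 < s → 0 < t →
    iteratedDerivWithin n T (Set.Ioi 0) (t + s)
      = (iteratedDerivWithin n T (Set.Ioi 0) t).comp (T s)
  derivBound : ∃ C : ℝ, 0 < C ∧ ∀ n : ℕ, 1 ≤ n → ∀ t : ℝ, 0 < t →
    ‖iteratedDerivWithin n T (Set.Ioi 0) t‖ ≤ C ^ n / t ^ n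

/-- The smallest integer `> β` (for `β > 0`). -/
def mExp (β : ℝ) : ℕ := ⌊β⌋₊ + 1

/-- Membership in the Lipschitz space `Λ_A^β`. -/
def MemLambda (T : ℝ → X →L[ℂ] X) (β : ℝ) (xs : X →L[ℂ] ℂ) : Prop :=
  ∃ C : ℝ, ∀ t : ℝ, 0 < t →
    ‖dualDeriv T (mExp β) xs t‖ ≤ C * t ^ (β - (mExp β : ℝ))

/-- The norm of the Lipschitz space `Λ_A^β`. -/
def lambdaNorm (T : ℝ → X →L[ℂ] X) (β : ℝ) (xs : X →L[ℂ] ℂ) : ℝ :=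
  ‖xs‖ + ⨆ t : Set.Ioi (0:ℝ),
    (t : ℝ) ^ ((mExp β : ℝ) - β) * ‖dualDeriv T (mExp β) xs t‖

/-- `y* = A* x*` in the mild sense: `⟨y*, T_t x⟩ = ⟨x*, (d/dt T_t)(x)⟩`
for all `x ∈ X`, `t > 0`. -/
def MildAStar (T : ℝ → X →L[ℂ] X) (xs ys : X →L[ℂ] ℂ) : Prop :=
  ∀ (x : X) (t : ℝ), 0 < t →
    ys (T t x) = xs ((iteratedDerivWithin 1 T (Set.Ioi 0) t) x)

theorem norm_sub_le_of_norm_deriv_le_rpow {E : Type*} [NormedAddCommGroup E] [NormedSpace ℝ E]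
    {f f' : ℝ → E} {B e s t : ℝ} (he : e ≠ 0) (hs : 0 < s) (hst : s ≤ t)
    (hf : ∀ u ∈ Icc s t, HasDerivAt f (f' u) u)
    (hB : ∀ u ∈ Icc s t, ‖f' u‖ ≤ B * u ^ (e - 1)) :
    ‖f t - f s‖ ≤ B * ((t ^ e - s ^ e) / e) := by
  have hbound : ∀ u ∈ Icc s t,
      HasDerivAt (fun u => B * ((u ^ e - s ^ e) / e)) (B * u ^ (e - 1)) u := by
    intro u hu
    have h := (((Real.hasDerivAt_rpow_const (p := e) (Or.inl (hs.trans_le hu.1).ne')).sub_const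
      (s ^ e)).div_const e).const_mul B
    rwa [mul_div_cancel_left₀ _ he] at h
  refine image_norm_le_of_norm_deriv_right_le_deriv_boundary' (f := fun u => f u - f s)
    (fun u hu => ((hf u hu).continuousAt.sub continuousAt_const).continuousWithinAt)
    (fun u hu => ((hf u (Ico_subset_Icc_self hu)).sub_const (f s)).hasDerivWithinAt)
    (by simp) (fun u hu => (hbound u hu).continuousAt.continuousWithinAt)
    (fun u hu => (hbound u (Ico_subset_Icc_self hu)).hasDerivWithinAt)
    (fun u hu => hB u (Ico_subset_Icc_self hu)) ⟨hst, le_rfl⟩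

theorem norm_le_of_norm_deriv_le_rpow_of_neg {E : Type*} [NormedAddCommGroup E]
    [NormedSpace ℝ E] {f f' : ℝ → E} {B e t : ℝ} (he : e < 0) (ht : t ∈ Ioc 0 1)
    (hf : ∀ u ∈ Icc t 1, HasDerivAt f (f' u) u)
    (hB : ∀ u ∈ Icc t 1, ‖f' u‖ ≤ B * u ^ (e - 1)) :
    ‖f t‖ ≤ (‖f 1‖ + B / -e) * t ^ e := by
  have hB0 : 0 ≤ B := by simpa using (norm_nonneg _).trans (hB 1 ⟨ht.2, le_rfl⟩)
  have hte : 1 ≤ t ^ e := Real.one_le_rpow_of_pos_of_le_one_of_nonpos ht.1 ht.2 he.le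
  have hdiff := norm_sub_le_of_norm_deriv_le_rpow he.ne ht.1 ht.2 hf hB
  have hB' : B * ((1 ^ e - t ^ e) / e) = B / -e * (t ^ e - 1) := by
    rw [Real.one_rpow]
    field_simp
    ring
  rw [hB'] at hdiff
  calc ‖f t‖ ≤ ‖f 1‖ + ‖f 1 - f t‖ := norm_le_norm_add_norm_sub _ _
    _ ≤ ‖f 1‖ * t ^ e + B / -e * t ^ e := by
      gcongr
      · exact le_mul_of_one_le_right (norm_nonneg _) hte
      · exact hdiff.trans (by nlinarith [div_nonneg hB0 (neg_nonneg.2 he.le)])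
    _ = (‖f 1‖ + B / -e) * t ^ e := by ring

theorem exists_tendsto_nhdsGT_of_norm_sub_le {E : Type*} [NormedAddCommGroup E] [CompleteSpace E]
    {f : ℝ → E} {g : ℝ → ℝ} (hg : Tendsto g (𝓝[>] 0) (𝓝 0))
    (hfg : ∀ s t, 0 < s → s ≤ t → t ≤ 1 → ‖f t - f s‖ ≤ g t - g s) :
    ∃ y, Tendsto f (𝓝[>] 0) (𝓝 y) := by
  refine cauchy_map_iff_exists_tendsto.1 (Metric.cauchy_iff.2 ⟨inferInstance, fun ε hε => ?_⟩)
  have hU : ∀ᶠ u in 𝓝[>] (0 : ℝ), 0 < u ∧ u ≤ 1 ∧ |g u| < ε / 2 := by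
    filter_upwards [self_mem_nhdsWithin, Ioc_mem_nhdsGT one_pos,
      hg (Metric.ball_mem_nhds 0 (half_pos hε))] with u hu hu1 hgu
    simp only [mem_preimage, Metric.mem_ball, Real.dist_0_eq_abs] at hgu
    exact ⟨hu, hu1.2, hgu⟩
  refine ⟨f '' _, image_mem_map hU, ?_⟩
  rintro _ ⟨s, ⟨hs, hs1, hgs⟩, rfl⟩ _ ⟨t, ⟨ht, ht1, hgt⟩, rfl⟩
  rw [dist_eq_norm]
  rcases le_total s t with hst | hts
  · rw [norm_sub_rev]
    linarith [hfg s t hs hst ht1, abs_lt.1 hgs, abs_lt.1 hgt]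
  · linarith [hfg t s ht hts hs1, abs_lt.1 hgs, abs_lt.1 hgt]

theorem ContinuousLinearMap.iteratedDerivWithin_comp_left {𝕜 F G : Type*}
    [NontriviallyNormedField 𝕜] [NormedAddCommGroup F] [NormedSpace 𝕜 F] [NormedAddCommGroup G]
    [NormedSpace 𝕜 G] (g : F →L[𝕜] G) {f : 𝕜 → F} {s : Set 𝕜} {x : 𝕜} {i : ℕ}
    (hf : ContDiffWithinAt 𝕜 i f s x) (hs : UniqueDiffOn 𝕜 s) (hx : x ∈ s) :
    iteratedDerivWithin i (g ∘ f) s x = g (iteratedDerivWithin i f s x) := by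
  rw [iteratedDerivWithin_eq_iteratedFDerivWithin, iteratedDerivWithin_eq_iteratedFDerivWithin,
    g.iteratedFDerivWithin_comp_left hf hs hx le_rfl]
  rfl

section

variable {E : Type*} [NormedAddCommGroup E] [NormedSpace ℂ E] {T : ℝ → E →L[ℂ] E}

theorem dualDeriv_eq_comp (hT : IsHoloSG T) (xs : E →L[ℂ] ℂ) (n : ℕ) {t : ℝ} (ht : 0 < t) :
    dualDeriv T n xs t = xs.comp (iteratedDerivWithin n T (Ioi 0) t) :=
  (((ContinuousLinearMap.compL ℂ E E ℂ) xs).restrictScalars ℝ).iteratedDerivWithin_comp_left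
    ((hT.smooth t ht).of_le (by exact_mod_cast le_top)) (uniqueDiffOn_Ioi 0) ht

theorem norm_dualDeriv_le (hT : IsHoloSG T) (xs : E →L[ℂ] ℂ) (n : ℕ) {t : ℝ} (ht : 0 < t) :
    ‖dualDeriv T n xs t‖ ≤ ‖xs‖ * ‖iteratedDerivWithin n T (Ioi 0) t‖ := by
  rw [dualDeriv_eq_comp hT xs n ht]
  exact ContinuousLinearMap.opNorm_comp_le _ _

theorem hasDerivAt_dualDeriv (hT : IsHoloSG T) (xs : E →L[ℂ] ℂ) (n : ℕ) {t : ℝ} (ht : 0 < t) :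
    HasDerivAt (dualDeriv T n xs) (dualDeriv T (n + 1) xs t) t := by
  have horbit : ContDiffOn ℝ (⊤ : ℕ∞) (fun s => xs.comp (T s)) (Ioi 0) :=
    (((ContinuousLinearMap.compL ℂ E E ℂ) xs).restrictScalars ℝ).contDiff.comp_contDiffOn
      hT.smooth
  have hdiff := horbit.differentiableOn_iteratedDerivWithin
    (by exact_mod_cast WithTop.coe_lt_top n) (uniqueDiffOn_Ioi 0) t ht
  rw [dualDeriv, iteratedDerivWithin_succ]
  exact hdiff.hasDerivWithinAt.hasDerivAt (Ioi_mem_nhds ht)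

theorem dualDeriv_succ_of_mildAStar (hT : IsHoloSG T) {xs ys : E →L[ℂ] ℂ}
    (h : MildAStar T xs ys) (n : ℕ) {t : ℝ} (ht : 0 < t) :
    dualDeriv T (n + 1) xs t = dualDeriv T n ys t := by
  have hderiv : ContDiffOn ℝ (⊤ : ℕ∞) (derivWithin T (Ioi 0)) (Ioi 0) :=
    hT.smooth.derivWithin (uniqueDiffOn_Ioi 0) (by simp)
  have horbit : EqOn (fun s => xs.comp (derivWithin T (Ioi 0) s)) (fun s => ys.comp (T s))
      (Ioi 0) := by
    intro s hs
    ext x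
    simpa [iteratedDerivWithin_one] using (h x s hs).symm
  calc dualDeriv T (n + 1) xs t
      = xs.comp (iteratedDerivWithin n (derivWithin T (Ioi 0)) (Ioi 0) t) := by
        rw [dualDeriv_eq_comp hT xs _ ht, iteratedDerivWithin_succ']
    _ = iteratedDerivWithin n (fun s => xs.comp (derivWithin T (Ioi 0) s)) (Ioi 0) t :=
        ((((ContinuousLinearMap.compL ℂ E E ℂ) xs).restrictScalars ℝ).iteratedDerivWithin_comp_left
          ((hderiv t ht).of_le (by exact_mod_cast le_top)) (uniqueDiffOn_Ioi 0) ht).symm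
    _ = dualDeriv T n ys t := iteratedDerivWithin_congr horbit ht

theorem mExp_add_one {β : ℝ} (hβ : 0 ≤ β) : mExp (β + 1) = mExp β + 1 := by
  rw [mExp, mExp, Nat.floor_add_one hβ]

theorem two_le_mExp {γ : ℝ} (hγ : 1 ≤ γ) : 2 ≤ mExp γ := by
  have : 1 ≤ ⌊γ⌋₊ := Nat.le_floor (by exact_mod_cast hγ)
  rw [mExp]
  omega

theorem norm_le_lambdaNorm (T : ℝ → E →L[ℂ] E) (γ : ℝ) (xs : E →L[ℂ] ℂ) :
    ‖xs‖ ≤ lambdaNorm T γ xs :=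
  le_add_of_nonneg_right <|
    Real.iSup_nonneg fun t => mul_nonneg (Real.rpow_nonneg t.2.le _) (norm_nonneg _)

theorem norm_dualDeriv_mExp_le {γ : ℝ} {xs : E →L[ℂ] ℂ} (h : MemLambda T γ xs) {t : ℝ}
    (ht : 0 < t) :
    ‖dualDeriv T (mExp γ) xs t‖ ≤ (lambdaNorm T γ xs - ‖xs‖) * t ^ (γ - mExp γ) := by
  obtain ⟨C, hC⟩ := h
  have hbdd : BddAbove (range fun s : Ioi (0 : ℝ) =>
      (s : ℝ) ^ ((mExp γ : ℝ) - γ) * ‖dualDeriv T (mExp γ) xs s‖) := by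
    refine ⟨C, ?_⟩
    rintro _ ⟨s, rfl⟩
    calc (s : ℝ) ^ ((mExp γ : ℝ) - γ) * ‖dualDeriv T (mExp γ) xs s‖
        ≤ (s : ℝ) ^ ((mExp γ : ℝ) - γ) * (C * (s : ℝ) ^ (γ - mExp γ)) :=
          mul_le_mul_of_nonneg_left (hC s s.2) (Real.rpow_nonneg s.2.le _)
      _ = C := by rw [mul_left_comm, ← Real.rpow_add s.2]; simp
  rw [lambdaNorm, add_sub_cancel_left]
  calc ‖dualDeriv T (mExp γ) xs t‖
      = t ^ (γ - mExp γ) * (t ^ ((mExp γ : ℝ) - γ) * ‖dualDeriv T (mExp γ) xs t‖) := by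
        rw [← mul_assoc, ← Real.rpow_add ht]; simp
    _ ≤ t ^ (γ - mExp γ) * ⨆ s : Ioi (0 : ℝ),
          (s : ℝ) ^ ((mExp γ : ℝ) - γ) * ‖dualDeriv T (mExp γ) xs s‖ :=
        mul_le_mul_of_nonneg_left (le_ciSup hbdd ⟨t, ht⟩) (Real.rpow_nonneg ht.le _)
    _ = _ := mul_comm _ _

theorem exists_norm_dualDeriv_at_one_le (hT : IsHoloSG T) :
    ∃ C, ∀ k, 1 ≤ k → ∀ γ xs, ‖dualDeriv T k xs 1‖ ≤ C ^ k * lambdaNorm T γ xs := by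
  obtain ⟨C, -, hC⟩ := hT.derivBound
  refine ⟨C, fun k hk γ xs => ?_⟩
  have hL := norm_le_lambdaNorm T γ xs
  calc ‖dualDeriv T k xs 1‖ ≤ ‖xs‖ * ‖iteratedDerivWithin k T (Ioi 0) 1‖ :=
        norm_dualDeriv_le hT xs k one_pos
    _ ≤ lambdaNorm T γ xs * C ^ k :=
        mul_le_mul hL (by simpa using hC k hk 1 one_pos) (norm_nonneg _) ((norm_nonneg _).trans hL)
    _ = C ^ k * lambdaNorm T γ xs := mul_comm _ _

theorem exists_norm_dualDeriv_le_rpow (hT : IsHoloSG T) {γ α : ℝ} (hα : α < 1)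
    (hαγ : α + 1 ≤ γ) {k : ℕ} (hk : 2 ≤ k) (hkγ : k ≤ mExp γ) :
    ∃ c, ∀ xs, MemLambda T γ xs → ∀ t ∈ Ioc (0 : ℝ) 1,
      ‖dualDeriv T k xs t‖ ≤ c * lambdaNorm T γ xs * t ^ (α + 1 - k) := by
  induction hkγ using Nat.decreasingInduction with
  | self =>
    refine ⟨1, fun xs hxs t ht => ?_⟩
    have hsup : 0 ≤ lambdaNorm T γ xs - ‖xs‖ := sub_nonneg.2 (norm_le_lambdaNorm T γ xs)
    calc ‖dualDeriv T (mExp γ) xs t‖ ≤ (lambdaNorm T γ xs - ‖xs‖) * t ^ (γ - mExp γ) :=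
          norm_dualDeriv_mExp_le hxs ht.1
      _ ≤ lambdaNorm T γ xs * t ^ (α + 1 - mExp γ) :=
        mul_le_mul (by linarith [norm_nonneg xs])
          (Real.rpow_le_rpow_of_exponent_ge ht.1 ht.2 (by linarith)) (Real.rpow_nonneg ht.1.le _)
          (hsup.trans (by linarith [norm_nonneg xs]))
      _ = _ := by ring
  | of_succ k hkn ih =>
    obtain ⟨c, hc⟩ := ih (by omega)
    obtain ⟨C, hC⟩ := exists_norm_dualDeriv_at_one_le hT
    refine ⟨C ^ k + c / (k - 1 - α), fun xs hxs t ht => ?_⟩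
    have hone := hC k (by omega) γ xs
    have hk2 : (2 : ℝ) ≤ k := by exact_mod_cast hk
    have hlow := norm_le_of_norm_deriv_le_rpow_of_neg (e := α + 1 - k) (by linarith) ht
      (fun u hu => hasDerivAt_dualDeriv hT xs k (ht.1.trans_le hu.1))
      (fun u hu => by
        convert hc xs hxs u ⟨ht.1.trans_le hu.1, hu.2⟩ using 3
        push_cast
        ring)
    calc ‖dualDeriv T k xs t‖
        ≤ (‖dualDeriv T k xs 1‖ + c * lambdaNorm T γ xs / -(α + 1 - k)) * t ^ (α + 1 - k) :=
          hlow
      _ ≤ (C ^ k * lambdaNorm T γ xs + c * lambdaNorm T γ xs / -(α + 1 - k)) *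
            t ^ (α + 1 - k) :=
          mul_le_mul_of_nonneg_right (by gcongr) (Real.rpow_nonneg ht.1.le _)
      _ = (C ^ k + c / (k - 1 - α)) * lambdaNorm T γ xs * t ^ (α + 1 - k) := by
        rw [show -(α + 1 - k) = (k : ℝ) - 1 - α by ring]
        ring

theorem exists_norm_dualDeriv_one_sub_le (hT : IsHoloSG T) {γ : ℝ} (hγ : 1 < γ) :
    ∃ α : ℝ, 0 < α ∧ ∃ c, ∀ xs, MemLambda T γ xs → ∀ s t : ℝ, 0 < s → s ≤ t → t ≤ 1 →
      ‖dualDeriv T 1 xs t - dualDeriv T 1 xs s‖ ≤ c * lambdaNorm T γ xs * (t ^ α - s ^ α) := by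
  obtain ⟨α, hα0, hα1, hαγ⟩ : ∃ α : ℝ, 0 < α ∧ α < 1 ∧ α + 1 ≤ γ :=
    ⟨min (γ - 1) (1 / 2), lt_min (by linarith) (by norm_num),
      (min_le_right _ _).trans_lt (by norm_num), by linarith [min_le_left (γ - 1) (1 / 2)]⟩
  obtain ⟨c, hc⟩ := exists_norm_dualDeriv_le_rpow hT hα1 hαγ le_rfl (two_le_mExp hγ.le)
  refine ⟨α, hα0, c / α, fun xs hxs s t hs hst ht1 => ?_⟩
  calc ‖dualDeriv T 1 xs t - dualDeriv T 1 xs s‖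
      ≤ c * lambdaNorm T γ xs * ((t ^ α - s ^ α) / α) :=
        norm_sub_le_of_norm_deriv_le_rpow hα0.ne' hs hst
          (fun u hu => hasDerivAt_dualDeriv hT xs 1 (hs.trans_le hu.1))
          (fun u hu => by
            convert hc xs hxs u ⟨hs.trans_le hu.1, hu.2.trans ht1⟩ using 3
            norm_num
            ring)
    _ = c / α * lambdaNorm T γ xs * (t ^ α - s ^ α) := by ring

theorem exists_norm_dualDeriv_one_le (hT : IsHoloSG T) {γ : ℝ} (hγ : 1 < γ) :
    ∃ K, 0 ≤ K ∧ ∀ xs, MemLambda T γ xs → ∀ t ∈ Ioc (0 : ℝ) 1,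
      ‖dualDeriv T 1 xs t‖ ≤ K * lambdaNorm T γ xs := by
  obtain ⟨α, hα, c, hc⟩ := exists_norm_dualDeriv_one_sub_le hT hγ
  obtain ⟨C, hC⟩ := exists_norm_dualDeriv_at_one_le hT
  refine ⟨|C| + |c|, by positivity, fun xs hxs t ht => ?_⟩
  have hL0 : 0 ≤ lambdaNorm T γ xs := (norm_nonneg _).trans (norm_le_lambdaNorm T γ xs)
  have htα : t ^ α ≤ 1 := Real.rpow_le_one ht.1.le ht.2 hα.le
  have htα0 : 0 ≤ t ^ α := Real.rpow_nonneg ht.1.le _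
  have hinc := hc xs hxs t 1 ht.1 ht.2 le_rfl
  rw [Real.one_rpow] at hinc
  have hone := hC 1 le_rfl γ xs
  calc ‖dualDeriv T 1 xs t‖ ≤ ‖dualDeriv T 1 xs 1‖ + ‖dualDeriv T 1 xs 1 - dualDeriv T 1 xs t‖ :=
        norm_le_norm_add_norm_sub _ _
    _ ≤ |C| * lambdaNorm T γ xs + |c| * lambdaNorm T γ xs := by
        gcongr
        · exact hone.trans (by simpa using mul_le_mul_of_nonneg_right (le_abs_self C) hL0)
        · refine hinc.trans ?_
          calc c * lambdaNorm T γ xs * (1 - t ^ α) ≤ |c| * lambdaNorm T γ xs * (1 - t ^ α) :=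
                mul_le_mul_of_nonneg_right (mul_le_mul_of_nonneg_right (le_abs_self c) hL0)
                  (by linarith)
            _ ≤ |c| * lambdaNorm T γ xs := mul_le_of_le_one_right (by positivity) (by linarith)
    _ = (|C| + |c|) * lambdaNorm T γ xs := by ring

theorem exists_tendsto_dualDeriv_one (hT : IsHoloSG T) {γ : ℝ} (hγ : 1 < γ) {xs : E →L[ℂ] ℂ}
    (hxs : MemLambda T γ xs) : ∃ ys, Tendsto (dualDeriv T 1 xs) (𝓝[>] 0) (𝓝 ys) := by
  obtain ⟨α, hα, c, hc⟩ := exists_norm_dualDeriv_one_sub_le hT hγ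
  refine exists_tendsto_nhdsGT_of_norm_sub_le (g := fun t => c * lambdaNorm T γ xs * t ^ α) ?_
    fun s t hs hst ht1 => by simpa only [mul_sub] using hc xs hxs s t hs hst ht1
  have h := ((Real.continuousAt_rpow_const 0 α (Or.inr hα.le)).tendsto.mono_left
    (nhdsWithin_le_nhds (s := Ioi 0))).const_mul (c * lambdaNorm T γ xs)
  simpa [Real.zero_rpow hα.ne'] using h

theorem mildAStar_of_tendsto (hT : IsHoloSG T) {xs ys : E →L[ℂ] ℂ}
    (h : Tendsto (dualDeriv T 1 xs) (𝓝[>] 0) (𝓝 ys)) : MildAStar T xs ys := by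
  intro x t ht
  have hderiv : ContinuousAt (iteratedDerivWithin 1 T (Ioi 0)) t :=
    (hT.smooth.continuousOn_iteratedDerivWithin (by exact_mod_cast le_top)
      (uniqueDiffOn_Ioi 0)).continuousAt (Ioi_mem_nhds ht)
  have hshift : Tendsto (fun s => s + t) (𝓝[>] 0) (𝓝 t) := by
    simpa using ((continuous_add_const t).tendsto 0).mono_left nhdsWithin_le_nhds
  have hlim : Tendsto (fun s => xs (iteratedDerivWithin 1 T (Ioi 0) (s + t) x)) (𝓝[>] 0)
      (𝓝 (xs (iteratedDerivWithin 1 T (Ioi 0) t x))) :=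
    (xs.continuous.tendsto _).comp
      (((ContinuousLinearMap.apply ℂ E x).continuous.tendsto _).comp (hderiv.tendsto.comp hshift))
  refine tendsto_nhds_unique
    ((((ContinuousLinearMap.apply ℂ ℂ (T t x)).continuous.tendsto ys).comp h).congr' ?_) hlim
  filter_upwards [self_mem_nhdsWithin] with s hs
  simp [dualDeriv_eq_comp hT xs 1 hs, hT.derivComp 1 t s ht hs]

theorem norm_le_of_mildAStar (hT : IsHoloSG T) {xs ys : E →L[ℂ] ℂ} (h : MildAStar T xs ys)
    {B : ℝ} (hB : ∀ t ∈ Ioc (0 : ℝ) 1, ‖dualDeriv T 1 xs t‖ ≤ B) : ‖ys‖ ≤ B := by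
  refine ys.opNorm_le_bound ((norm_nonneg _).trans (hB 1 ⟨one_pos, le_rfl⟩)) fun x => ?_
  refine le_of_tendsto ((ys.continuous.tendsto x).comp (hT.strong x)).norm ?_
  filter_upwards [Ioc_mem_nhdsGT one_pos] with t ht
  have hys : ys (T t x) = dualDeriv T 1 xs t x := by
    simpa [dualDeriv_eq_comp hT xs 1 ht.1] using h x t ht.1
  rw [Function.comp_apply, hys]
  exact (ContinuousLinearMap.le_opNorm _ x).trans
    (mul_le_mul_of_nonneg_right (hB t ht) (norm_nonneg x))

theorem memLambda_add_one_iff_of_mildAStar (hT : IsHoloSG T) {β : ℝ} (hβ : 0 ≤ β)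
    {xs ys : E →L[ℂ] ℂ} (h : MildAStar T xs ys) :
    MemLambda T (β + 1) xs ↔ MemLambda T β ys := by
  have hexp : β + 1 - ((mExp β + 1 : ℕ) : ℝ) = β - mExp β := by push_cast; ring
  simp only [MemLambda, mExp_add_one hβ, hexp]
  exact exists_congr fun C => forall₂_congr fun t ht => by
    rw [dualDeriv_succ_of_mildAStar hT h _ ht]

theorem norm_add_lambdaNorm_of_mildAStar (hT : IsHoloSG T) {β : ℝ} (hβ : 0 ≤ β)
    {xs ys : E →L[ℂ] ℂ} (h : MildAStar T xs ys) :
    ‖xs‖ + lambdaNorm T β ys = ‖ys‖ + lambdaNorm T (β + 1) xs := by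
  have hexp : ((mExp β + 1 : ℕ) : ℝ) - (β + 1) = mExp β - β := by push_cast; ring
  have hsup : ∀ t : Ioi (0 : ℝ),
      (t : ℝ) ^ ((mExp β : ℝ) - β) * ‖dualDeriv T (mExp β) ys t‖ =
        (t : ℝ) ^ (((mExp β + 1 : ℕ) : ℝ) - (β + 1)) * ‖dualDeriv T (mExp β + 1) xs t‖ := by
    intro t
    rw [hexp, dualDeriv_succ_of_mildAStar hT h _ t.2]
  rw [lambdaNorm, lambdaNorm, mExp_add_one hβ, iSup_congr hsup]
  ring

end

/-- `x* ∈ Λ_A^{β+1}` iff `A* x*` exists in the mild sense and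
belongs to `Λ_A^β`; moreover the norms `‖x*‖_{Λ_A^{β+1}}` and
`‖x*‖_{X*} + ‖A* x*‖_{Λ_A^β}` are equivalent, with constants independent of `x*`. -/
theorem stmt4 (T : ℝ → X →L[ℂ] X) (hT : IsHoloSG T) (β : ℝ) (hβ : 0 < β) :
    (∀ xs : X →L[ℂ] ℂ,
      (MemLambda T (β + 1) xs ↔
        ∃ ys : X →L[ℂ] ℂ, MildAStar T xs ys ∧ MemLambda T β ys)) ∧
    ∃ C : ℝ, 1 < C ∧ ∀ xs ys : X →L[ℂ] ℂ,
      MildAStar T xs ys → MemLambda T (β + 1) xs →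
      C⁻¹ * lambdaNorm T (β + 1) xs ≤ ‖xs‖ + lambdaNorm T β ys ∧
      ‖xs‖ + lambdaNorm T β ys ≤ C * lambdaNorm T (β + 1) xs := by
  have hγ : 1 < β + 1 := by linarith
  refine ⟨fun xs => ⟨fun hxs => ?_, fun ⟨ys, h, hys⟩ =>
    (memLambda_add_one_iff_of_mildAStar hT hβ.le h).2 hys⟩, ?_⟩
  · obtain ⟨ys, hlim⟩ := exists_tendsto_dualDeriv_one hT hγ hxs
    have h := mildAStar_of_tendsto hT hlim
    exact ⟨ys, h, (memLambda_add_one_iff_of_mildAStar hT hβ.le h).1 hxs⟩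
  · obtain ⟨K, hK0, hK⟩ := exists_norm_dualDeriv_one_le hT hγ
    refine ⟨K + 2, by linarith, fun xs ys h hxs => ?_⟩
    have hys : ‖ys‖ ≤ K * lambdaNorm T (β + 1) xs := norm_le_of_mildAStar hT h (hK xs hxs)
    have hL0 : 0 ≤ lambdaNorm T (β + 1) xs :=
      (norm_nonneg _).trans (norm_le_lambdaNorm T (β + 1) xs)
    rw [norm_add_lambdaNorm_of_mildAStar hT hβ.le h]
    constructor
    · calc (K + 2)⁻¹ * lambdaNorm T (β + 1) xs ≤ lambdaNorm T (β + 1) xs :=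
            mul_le_of_le_one_left hL0 (inv_le_one_of_one_le₀ (by linarith))
        _ ≤ ‖ys‖ + lambdaNorm T (β + 1) xs := le_add_of_nonneg_left (norm_nonneg _)
    · nlinarith
end
end

section
/- Let 0 < β₀ < β₁ and 0 < θ < 1, and set β = (1−θ) β₀ + θ β₁. Then the interpolation space obtained by the K-method of Peetre satisfies (Λ_A^{β₀}, Λ_A^{β₁})_θ = Λ_A^β as sets, and there is a constant C > 1 such that C^{−1} ‖x*‖_{Λ_A^β} ≤ ‖x*‖_θ ≤ C ‖x*‖_{Λ_A^β} for all x* in these spaces. -/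
open Filter Topology MeasureTheory Set

noncomputable section

variable {X : Type*} [NormedAddCommGroup X] [NormedSpace ℂ X] [CompleteSpace X]

/-- The Peetre K-functional for the couple `(Λ_A^{β₀}, Λ_A^{β₁})`. -/
def Kfun (T : ℝ → X →L[ℂ] X) (β₀ β₁ t : ℝ) (xs : X →L[ℂ] ℂ) : ℝ :=
  sInf {v : ℝ | ∃ x0 x1 : X →L[ℂ] ℂ, MemLambda T β₀ x0 ∧ MemLambda T β₁ x1 ∧
    xs = x0 + x1 ∧ v = lambdaNorm T β₀ x0 + t * lambdaNorm T β₁ x1}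

/-!
Write `Dᵏz(t)` for the `k`-th time derivative of `t ↦ T_t^* z`. Membership in `Λ^γ` only depends
on a decay `‖Dᵏz(t)‖ ≲ t^{γ-k}` at some order `k > γ`: analyticity moves such a bound up in `k`
(`A^{k+j}T_t = A^kT_{t/2} ∘ A^jT_{t/2}`), and integrating from `t = ∞` moves it down.

If `x ∈ Λ^β` with `m = mExp β`, split `x = x₀ + x₁` with `x₀ = (I - T_s^*)^m x`. For `t ≥ s` each
difference gains a factor `s` (mean value theorem); for `t ≤ s` the bound is integrated `m` times
from `t`, after lowering the exponent `β` to `β₀`. Hence `‖x₀‖_{β₀} ≲ s^{β-β₀}‖x‖_β`. The remainder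
`x₁` is a combination of the shifts `T_{js}^* x`, so `‖x₁‖_{β₁} ≲ s^{β-β₁}‖x‖_β`, and
`t = s^{β₁-β₀}` gives `K(t, x) ≲ t^θ ‖x‖_β`.

Conversely, for every splitting `x = x₀ + x₁`,
`‖D^{m₁}x(s)‖ ≲ s^{β₀-m₁}(‖x₀‖_{β₀} + s^{β₁-β₀}‖x₁‖_{β₁})`, where `m₁ = mExp β₁`, so
`‖D^{m₁}x(s)‖ ≲ s^{β₀-m₁} K(s^{β₁-β₀}, x) ≲ s^{β-m₁}` as soon as `K(t, x) ≲ t^θ`.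
-/

section RealAnalysis

variable {F : Type*} [NormedAddCommGroup F] [NormedSpace ℝ F] {g g' : ℝ → F} {a b c e : ℝ}

theorem norm_sub_le_of_norm_deriv_le_rpow_s17 (ha : 0 < a) (hab : a ≤ b)
    (hg : ∀ u ∈ Icc a b, HasDerivAt g (g' u) u) (hbound : ∀ u ∈ Icc a b, ‖g' u‖ ≤ c * u ^ e)
    (he : e ≠ -1) : ‖g b - g a‖ ≤ c * ((b ^ (e + 1) - a ^ (e + 1)) / (e + 1)) := by
  have he1 : e + 1 ≠ 0 := fun h => he (by linarith)
  have hB : ∀ u ∈ Icc a b, HasDerivAt (fun u => c * ((u ^ (e + 1) - a ^ (e + 1)) / (e + 1)))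
      (c * u ^ e) u := by
    intro u hu
    have h := (((Real.hasDerivAt_rpow_const (p := e + 1) (Or.inl (ha.trans_le hu.1).ne')).sub_const
      (a ^ (e + 1))).div_const (e + 1)).const_mul c
    rwa [add_sub_cancel_right, mul_div_cancel_left₀ _ he1] at h
  refine image_norm_le_of_norm_deriv_right_le_deriv_boundary' (f := fun u => g u - g a)
    (B := fun u => c * ((u ^ (e + 1) - a ^ (e + 1)) / (e + 1))) (B' := fun u => c * u ^ e)
    (fun u hu => ((hg u hu).sub_const _).continuousAt.continuousWithinAt)
    (fun u hu => ((hg u (Ico_subset_Icc_self hu)).sub_const _).hasDerivWithinAt)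
    (by simp) (fun u hu => (hB u hu).continuousAt.continuousWithinAt)
    (fun u hu => (hB u (Ico_subset_Icc_self hu)).hasDerivWithinAt)
    (fun u hu => hbound u (Ico_subset_Icc_self hu)) (right_mem_Icc.2 hab)

theorem norm_sub_le_of_norm_deriv_le_rpow_of_lt (ha : 0 < a) (hab : a ≤ b)
    (hg : ∀ u ∈ Icc a b, HasDerivAt g (g' u) u) (hbound : ∀ u ∈ Icc a b, ‖g' u‖ ≤ c * u ^ e)
    (he : e < -1) : ‖g b - g a‖ ≤ c / (-e - 1) * a ^ (e + 1) := by
  have hc : 0 ≤ c := nonneg_of_mul_nonneg_left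
    ((norm_nonneg _).trans (hbound a (left_mem_Icc.2 hab))) (Real.rpow_pos_of_pos ha e)
  have hb : 0 ≤ b ^ (e + 1) := Real.rpow_nonneg (ha.le.trans hab) _
  calc ‖g b - g a‖ ≤ c * ((b ^ (e + 1) - a ^ (e + 1)) / (e + 1)) :=
        norm_sub_le_of_norm_deriv_le_rpow_s17 ha hab hg hbound he.ne
    _ = c / (-e - 1) * (a ^ (e + 1) - b ^ (e + 1)) := by
        field_simp [show -e - 1 ≠ 0 by linarith, show e + 1 ≠ 0 by linarith]; ring
    _ ≤ c / (-e - 1) * a ^ (e + 1) := by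
        gcongr
        · exact div_nonneg hc (by linarith)
        · linarith

theorem norm_sub_le_of_norm_deriv_le_rpow_of_gt (ha : 0 < a) (hab : a ≤ b)
    (hg : ∀ u ∈ Icc a b, HasDerivAt g (g' u) u) (hbound : ∀ u ∈ Icc a b, ‖g' u‖ ≤ c * u ^ e)
    (he : -1 < e) : ‖g b - g a‖ ≤ c / (e + 1) * b ^ (e + 1) := by
  have hc : 0 ≤ c := nonneg_of_mul_nonneg_left
    ((norm_nonneg _).trans (hbound a (left_mem_Icc.2 hab))) (Real.rpow_pos_of_pos ha e)
  have ha' : 0 ≤ a ^ (e + 1) := Real.rpow_nonneg ha.le _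
  calc ‖g b - g a‖ ≤ c * ((b ^ (e + 1) - a ^ (e + 1)) / (e + 1)) :=
        norm_sub_le_of_norm_deriv_le_rpow_s17 ha hab hg hbound he.ne'
    _ = c / (e + 1) * (b ^ (e + 1) - a ^ (e + 1)) := by ring
    _ ≤ c / (e + 1) * b ^ (e + 1) := by
        gcongr
        · exact div_nonneg hc (by linarith)
        · linarith

theorem hasDerivAt_iteratedDerivWithin_Ioi {f : ℝ → F} (hf : ContDiffOn ℝ (⊤ : ℕ∞) f (Ioi 0))
    (n : ℕ) {t : ℝ} (ht : 0 < t) :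
    HasDerivAt (iteratedDerivWithin n f (Ioi 0)) (iteratedDerivWithin (n + 1) f (Ioi 0) t) t := by
  rw [iteratedDerivWithin_succ]
  have hdiff := hf.differentiableOn_iteratedDerivWithin
    (WithTop.coe_lt_coe.2 (WithTop.coe_lt_top n)) isOpen_Ioi.uniqueDiffOn t ht
  exact hdiff.hasDerivWithinAt.hasDerivAt (Ioi_mem_nhds ht)

end RealAnalysis

theorem rpow_sub_mul_rpow_sub {t : ℝ} (ht : 0 < t) (a b : ℝ) : t ^ (a - b) * t ^ (b - a) = 1 := by
  rw [← Real.rpow_add ht, sub_add_sub_cancel, sub_self, Real.rpow_zero]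

theorem rpow_le_two_rpow_abs_mul_rpow {t u e : ℝ} (ht : 0 < t) (htu : t ≤ u) (hu : u ≤ 2 * t) :
    u ^ e ≤ 2 ^ |e| * t ^ e := by
  rcases le_or_gt 0 e with he | he
  · rw [abs_of_nonneg he, ← Real.mul_rpow zero_le_two ht.le]
    exact Real.rpow_le_rpow (ht.le.trans htu) hu he
  · calc u ^ e ≤ t ^ e := Real.rpow_le_rpow_of_nonpos ht htu he.le
      _ ≤ 2 ^ |e| * t ^ e :=
          le_mul_of_one_le_left (Real.rpow_nonneg ht.le _)
            (Real.one_le_rpow one_le_two (abs_nonneg e))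

theorem rpow_add_le_rpow_mul_rpow {u R p q : ℝ} (hu : 0 < u) (huR : u ≤ R) (hp : 0 ≤ p) :
    u ^ (p + q) ≤ R ^ p * u ^ q := by
  rw [Real.rpow_add hu]
  gcongr

theorem add_rpow_add_le_rpow_mul_rpow {s t p q : ℝ} (hs : 0 < s) (ht : 0 < t) (hp : p ≤ 0)
    (hq : q ≤ 0) : (t + s) ^ (p + q) ≤ s ^ p * t ^ q := by
  rw [Real.rpow_add (add_pos ht hs)]
  exact mul_le_mul (Real.rpow_le_rpow_of_nonpos hs (by linarith) hp)
    (Real.rpow_le_rpow_of_nonpos ht (by linarith) hq) (by positivity) (by positivity)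

theorem pow_mul_rpow_le_rpow_mul_rpow {s t a b : ℝ} {n : ℕ} (hs : 0 < s) (hst : s ≤ t)
    (ha : a ≤ n) : s ^ n * t ^ (a - n + b) ≤ s ^ a * t ^ b := by
  have ht : 0 < t := hs.trans_le hst
  calc s ^ n * t ^ (a - n + b) = s ^ n * t ^ (a - n) * t ^ b := by
        rw [Real.rpow_add ht, mul_assoc]
    _ ≤ s ^ n * s ^ (a - n) * t ^ b := by
        have h : t ^ (a - n) ≤ s ^ (a - n) := Real.rpow_le_rpow_of_nonpos hs hst (by linarith)
        gcongr
    _ = s ^ a * t ^ b := by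
        rw [← Real.rpow_natCast, ← Real.rpow_add hs, add_sub_cancel]

theorem lt_mExp (β : ℝ) : β < mExp β := by
  rw [mExp]; push_cast; exact Nat.lt_floor_add_one β

theorem mExp_mono : Monotone mExp := fun _ _ h => Nat.succ_le_succ (Nat.floor_mono h)

theorem mExp_ne_zero (β : ℝ) : mExp β ≠ 0 := Nat.succ_ne_zero _

section Semigroup

variable {E : Type*} [NormedAddCommGroup E] [NormedSpace ℂ E] {T : ℝ → E →L[ℂ] E}

/-- `T` is only smooth over `ℝ`, so left composition is used as an `ℝ`-linear map. -/
def compLeftCLM {D F : Type*} [NormedAddCommGroup D] [NormedSpace ℂ D] [NormedAddCommGroup F]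
    [NormedSpace ℂ F] (A : E →L[ℂ] F) : (D →L[ℂ] E) →L[ℝ] (D →L[ℂ] F) :=
  ((ContinuousLinearMap.compL ℂ D E F) A).restrictScalars ℝ

theorem dualDeriv_zero_left (n : ℕ) (t : ℝ) : dualDeriv T n (0 : E →L[ℂ] ℂ) t = 0 := by
  simp [dualDeriv, iteratedDerivWithin_eq_iteratedFDerivWithin]

namespace IsHoloSG

theorem contDiffOn_comp (hT : IsHoloSG T) (z : E →L[ℂ] ℂ) :
    ContDiffOn ℝ (⊤ : ℕ∞) (fun s => z.comp (T s)) (Ioi 0) :=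
  (compLeftCLM z).contDiff.comp_contDiffOn hT.smooth

theorem hasDerivAt_iteratedDerivWithin (hT : IsHoloSG T) (n : ℕ) {t : ℝ} (ht : 0 < t) :
    HasDerivAt (iteratedDerivWithin n T (Ioi 0)) (iteratedDerivWithin (n + 1) T (Ioi 0) t) t :=
  hasDerivAt_iteratedDerivWithin_Ioi hT.smooth n ht

theorem hasDerivAt_dualDeriv (hT : IsHoloSG T) (z : E →L[ℂ] ℂ) (n : ℕ) {t : ℝ} (ht : 0 < t) :
    HasDerivAt (dualDeriv T n z) (dualDeriv T (n + 1) z t) t :=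
  hasDerivAt_iteratedDerivWithin_Ioi (hT.contDiffOn_comp z) n ht

theorem dualDeriv_eq (hT : IsHoloSG T) (z : E →L[ℂ] ℂ) (n : ℕ) {t : ℝ} (ht : 0 < t) :
    dualDeriv T n z t = z.comp (iteratedDerivWithin n T (Ioi 0) t) := by
  have h := (compLeftCLM z).iteratedFDerivWithin_comp_left (hT.smooth t ht)
    isOpen_Ioi.uniqueDiffOn ht (WithTop.coe_le_coe.2 (le_top : (n : ℕ∞) ≤ ⊤))
  rw [dualDeriv, iteratedDerivWithin_eq_iteratedFDerivWithin,
    iteratedDerivWithin_eq_iteratedFDerivWithin]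
  exact congrArg (fun L => L fun _ => (1 : ℝ)) h

theorem iteratedDerivWithin_add_add (hT : IsHoloSG T) (n k : ℕ) {s t : ℝ} (hs : 0 < s)
    (ht : 0 < t) : iteratedDerivWithin (n + k) T (Ioi 0) (t + s)
      = (iteratedDerivWithin n T (Ioi 0) t).comp (iteratedDerivWithin k T (Ioi 0) s) := by
  induction k generalizing s with
  | zero => simpa using hT.derivComp n s t hs ht
  | succ k ih =>
    -- both sides are the `s`-derivatives of the two sides of `ih`, which agree on `Ioi 0`
    have hlhs : HasDerivAt (fun u => iteratedDerivWithin (n + k) T (Ioi 0) (t + u))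
        (iteratedDerivWithin (n + k + 1) T (Ioi 0) (t + s)) s :=
      (hT.hasDerivAt_iteratedDerivWithin (n + k) (add_pos ht hs)).comp_const_add t s
    have hrhs := (compLeftCLM (iteratedDerivWithin n T (Ioi 0) t)).hasFDerivAt.comp_hasDerivAt s
      (hT.hasDerivAt_iteratedDerivWithin k hs)
    have heq : (fun u => iteratedDerivWithin (n + k) T (Ioi 0) (t + u))
        =ᶠ[𝓝 s] compLeftCLM (iteratedDerivWithin n T (Ioi 0) t) ∘ iteratedDerivWithin k T (Ioi 0) :=
      eventually_of_mem (Ioi_mem_nhds hs) fun u hu => ih hu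
    exact hlhs.unique (hrhs.congr_of_eventuallyEq heq)

theorem dualDeriv_add_left (hT : IsHoloSG T) (z w : E →L[ℂ] ℂ) (n : ℕ) {t : ℝ} (ht : 0 < t) :
    dualDeriv T n (z + w) t = dualDeriv T n z t + dualDeriv T n w t := by
  simp only [hT.dualDeriv_eq _ n ht, ContinuousLinearMap.add_comp]

theorem dualDeriv_sub_left (hT : IsHoloSG T) (z w : E →L[ℂ] ℂ) (n : ℕ) {t : ℝ} (ht : 0 < t) :
    dualDeriv T n (z - w) t = dualDeriv T n z t - dualDeriv T n w t := by
  simp only [hT.dualDeriv_eq _ n ht, ContinuousLinearMap.sub_comp]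

theorem dualDeriv_add_add (hT : IsHoloSG T) (z : E →L[ℂ] ℂ) (n k : ℕ) {s t : ℝ} (hs : 0 < s)
    (ht : 0 < t) : dualDeriv T (n + k) z (t + s)
      = (dualDeriv T n z t).comp (iteratedDerivWithin k T (Ioi 0) s) := by
  rw [hT.dualDeriv_eq z _ (add_pos ht hs), hT.dualDeriv_eq z n ht,
    hT.iteratedDerivWithin_add_add n k hs ht, ContinuousLinearMap.comp_assoc]

theorem dualDeriv_comp (hT : IsHoloSG T) (z : E →L[ℂ] ℂ) (k : ℕ) {s t : ℝ} (hs : 0 < s)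
    (ht : 0 < t) : dualDeriv T k (z.comp (T s)) t = dualDeriv T k z (t + s) := by
  have h := hT.iteratedDerivWithin_add_add 0 k ht hs
  rw [zero_add, iteratedDerivWithin_zero] at h
  rw [hT.dualDeriv_eq _ k ht, hT.dualDeriv_eq z k (add_pos ht hs), add_comm, h,
    ContinuousLinearMap.comp_assoc]

/-- The case `n = 0` is the uniform bound on `T`. -/
theorem exists_norm_iteratedDerivWithin_le (hT : IsHoloSG T) :
    ∃ C : ℝ, 1 ≤ C ∧ ∀ (n : ℕ) (t : ℝ), 0 < t →
      ‖iteratedDerivWithin n T (Ioi 0) t‖ ≤ C ^ (n + 1) * t ^ (-(n : ℝ)) := by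
  obtain ⟨M, hM⟩ := hT.bounded
  obtain ⟨Cb, hCb, hC⟩ := hT.derivBound
  refine ⟨max (max M Cb) 1, le_max_right _ _, fun n t ht => ?_⟩
  set C := max (max M Cb) 1
  have hC1 : 1 ≤ C := le_max_right _ _
  rcases n with _ | n
  · simp only [iteratedDerivWithin_zero, zero_add, pow_one, Nat.cast_zero, neg_zero,
      Real.rpow_zero, mul_one]
    exact (hM t ht).trans ((le_max_left _ _).trans (le_max_left _ _))
  · have hpow : Cb ^ (n + 1) ≤ C ^ (n + 1 + 1) :=
      (pow_le_pow_left₀ hCb.le ((le_max_right M Cb).trans (le_max_left _ _)) _).trans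
        (pow_le_pow_right₀ hC1 (Nat.le_succ _))
    calc ‖iteratedDerivWithin (n + 1) T (Ioi 0) t‖ ≤ Cb ^ (n + 1) / t ^ (n + 1) :=
          hC (n + 1) (Nat.succ_pos n) t ht
      _ = Cb ^ (n + 1) * t ^ (-((n + 1 : ℕ) : ℝ)) := by
          rw [Real.rpow_neg ht.le, Real.rpow_natCast, div_eq_mul_inv]
      _ ≤ C ^ (n + 1 + 1) * t ^ (-((n + 1 : ℕ) : ℝ)) := by gcongr

theorem exists_norm_dualDeriv_le (hT : IsHoloSG T) :
    ∃ C : ℝ, 0 ≤ C ∧ ∀ (n : ℕ) (z : E →L[ℂ] ℂ) (t : ℝ), 0 < t →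
      ‖dualDeriv T n z t‖ ≤ C ^ (n + 1) * ‖z‖ * t ^ (-(n : ℝ)) := by
  obtain ⟨C, hC1, hC⟩ := hT.exists_norm_iteratedDerivWithin_le
  refine ⟨C, by linarith, fun n z t ht => ?_⟩
  rw [hT.dualDeriv_eq z n ht]
  calc ‖z.comp (iteratedDerivWithin n T (Ioi 0) t)‖
      ≤ ‖z‖ * ‖iteratedDerivWithin n T (Ioi 0) t‖ := ContinuousLinearMap.opNorm_comp_le _ _
    _ ≤ ‖z‖ * (C ^ (n + 1) * t ^ (-(n : ℝ))) := by gcongr; exact hC n t ht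
    _ = C ^ (n + 1) * ‖z‖ * t ^ (-(n : ℝ)) := by ring

theorem tendsto_norm_dualDeriv_atTop (hT : IsHoloSG T) (z : E →L[ℂ] ℂ) {n : ℕ} (hn : n ≠ 0) :
    Tendsto (fun R => ‖dualDeriv T n z R‖) atTop (𝓝 0) := by
  obtain ⟨C, -, hC⟩ := hT.exists_norm_dualDeriv_le
  have hdecay : Tendsto (fun R : ℝ => C ^ (n + 1) * ‖z‖ * R ^ (-(n : ℝ))) atTop (𝓝 0) := by
    simpa using (tendsto_rpow_neg_atTop (by positivity : (0 : ℝ) < n)).const_mul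
      (C ^ (n + 1) * ‖z‖)
  refine squeeze_zero' (Eventually.of_forall fun R => norm_nonneg _) ?_ hdecay
  filter_upwards [eventually_gt_atTop 0] with R hR using hC n z R hR

end IsHoloSG

section PowerBounds

variable {k : ℕ} {β γ c : ℝ} {z : E →L[ℂ] ℂ}

/-- `MemLambda T β z` unfolds to `∃ c, HasPowBound T (mExp β) β c z`. -/
def HasPowBound (T : ℝ → E →L[ℂ] E) (k : ℕ) (γ c : ℝ) (z : E →L[ℂ] ℂ) : Prop :=
  ∀ t : ℝ, 0 < t → ‖dualDeriv T k z t‖ ≤ c * t ^ (γ - k)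

theorem HasPowBound.nonneg (h : HasPowBound T k γ c z) : 0 ≤ c := by
  simpa using (norm_nonneg _).trans (h 1 one_pos)

theorem HasPowBound.mono {c' : ℝ} (h : HasPowBound T k γ c z) (hc : c ≤ c') :
    HasPowBound T k γ c' z :=
  fun t ht => (h t ht).trans (by gcongr)

def lambdaSeminorm (T : ℝ → E →L[ℂ] E) (β : ℝ) (z : E →L[ℂ] ℂ) : ℝ :=
  ⨆ t : Ioi (0 : ℝ), (t : ℝ) ^ ((mExp β : ℝ) - β) * ‖dualDeriv T (mExp β) z t‖

theorem lambdaNorm_eq_add : lambdaNorm T β z = ‖z‖ + lambdaSeminorm T β z := rfl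

theorem lambdaSeminorm_nonneg : 0 ≤ lambdaSeminorm T β z :=
  Real.iSup_nonneg fun t => mul_nonneg (Real.rpow_nonneg t.2.le _) (norm_nonneg _)

theorem lambdaNorm_nonneg : 0 ≤ lambdaNorm T β z :=
  add_nonneg (norm_nonneg _) lambdaSeminorm_nonneg

theorem norm_le_lambdaNorm_s17 : ‖z‖ ≤ lambdaNorm T β z :=
  le_add_of_nonneg_right lambdaSeminorm_nonneg

theorem rpow_mul_le_of_hasPowBound (h : HasPowBound T (mExp β) β c z) {t : ℝ} (ht : 0 < t) :
    t ^ ((mExp β : ℝ) - β) * ‖dualDeriv T (mExp β) z t‖ ≤ c := by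
  calc t ^ ((mExp β : ℝ) - β) * ‖dualDeriv T (mExp β) z t‖
      ≤ t ^ ((mExp β : ℝ) - β) * (c * t ^ (β - mExp β)) := by gcongr; exact h t ht
    _ = c := by rw [mul_left_comm, rpow_sub_mul_rpow_sub ht, mul_one]

theorem lambdaSeminorm_le (h : HasPowBound T (mExp β) β c z) : lambdaSeminorm T β z ≤ c :=
  ciSup_le fun t => rpow_mul_le_of_hasPowBound h t.2

theorem lambdaNorm_le (h : HasPowBound T (mExp β) β c z) : lambdaNorm T β z ≤ ‖z‖ + c :=
  add_le_add le_rfl (lambdaSeminorm_le h)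

theorem MemLambda.hasPowBound_lambdaSeminorm (h : MemLambda T β z) :
    HasPowBound T (mExp β) β (lambdaSeminorm T β z) z := by
  obtain ⟨C, hC⟩ := h
  have hbdd : BddAbove (range fun t : Ioi (0 : ℝ) =>
      (t : ℝ) ^ ((mExp β : ℝ) - β) * ‖dualDeriv T (mExp β) z t‖) :=
    ⟨C, by rintro _ ⟨t, rfl⟩; exact rpow_mul_le_of_hasPowBound hC t.2⟩
  intro t ht
  calc ‖dualDeriv T (mExp β) z t‖
      = t ^ (β - mExp β) * (t ^ ((mExp β : ℝ) - β) * ‖dualDeriv T (mExp β) z t‖) := by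
        rw [← mul_assoc, rpow_sub_mul_rpow_sub ht, one_mul]
    _ ≤ t ^ (β - mExp β) * lambdaSeminorm T β z := by
        gcongr; exact le_ciSup hbdd (⟨t, ht⟩ : Ioi (0 : ℝ))
    _ = lambdaSeminorm T β z * t ^ (β - mExp β) := mul_comm _ _

theorem MemLambda.hasPowBound_lambdaNorm (h : MemLambda T β z) :
    HasPowBound T (mExp β) β (lambdaNorm T β z) z :=
  h.hasPowBound_lambdaSeminorm.mono (le_add_of_nonneg_left (norm_nonneg _))

theorem memLambda_zero : MemLambda T β (0 : E →L[ℂ] ℂ) :=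
  ⟨0, fun t _ => by simp [dualDeriv_zero_left]⟩

theorem lambdaNorm_zero : lambdaNorm T β (0 : E →L[ℂ] ℂ) = 0 := by
  simp [lambdaNorm, dualDeriv_zero_left]

namespace IsHoloSG

theorem exists_hasPowBound_of_le (hT : IsHoloSG T) {k₀ k : ℕ} (hk : k₀ ≤ k) :
    ∃ c' : ℝ, 0 ≤ c' ∧ ∀ z c, HasPowBound T k₀ γ c z → HasPowBound T k γ (c' * c) z := by
  obtain ⟨C, hC1, hC⟩ := hT.exists_norm_iteratedDerivWithin_le
  obtain ⟨j, rfl⟩ := Nat.exists_eq_add_of_le hk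
  refine ⟨C ^ (j + 1) * 2 ^ ((k₀ + j : ℕ) - γ), by positivity, fun z c h u hu => ?_⟩
  have hu2 : 0 < u / 2 := half_pos hu
  -- split `u = u/2 + u/2` between the bound on `z` and the analyticity of `T`
  have hsplit := hT.dualDeriv_add_add z k₀ j hu2 hu2
  rw [add_halves] at hsplit
  have hpow : (u / 2) ^ (γ - k₀) * (u / 2) ^ (-(j : ℝ))
      = 2 ^ ((k₀ + j : ℕ) - γ) * u ^ (γ - (k₀ + j : ℕ)) := by
    rw [← Real.rpow_add hu2, Real.div_rpow hu.le zero_le_two, div_eq_mul_inv,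
      ← Real.rpow_neg zero_le_two]
    push_cast; ring_nf
  calc ‖dualDeriv T (k₀ + j) z u‖
      ≤ ‖dualDeriv T k₀ z (u / 2)‖ * ‖iteratedDerivWithin j T (Ioi 0) (u / 2)‖ := by
        rw [hsplit]; exact ContinuousLinearMap.opNorm_comp_le _ _
    _ ≤ (c * (u / 2) ^ (γ - k₀)) * (C ^ (j + 1) * (u / 2) ^ (-(j : ℝ))) := by
        gcongr
        · exact mul_nonneg h.nonneg (Real.rpow_nonneg hu2.le _)
        · exact h _ hu2
        · exact hC j _ hu2
    _ = C ^ (j + 1) * 2 ^ ((k₀ + j : ℕ) - γ) * c * u ^ (γ - (k₀ + j : ℕ)) := by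
        rw [mul_mul_mul_comm, hpow]; ring

/-- Integrate down from `t = ∞`, where the derivatives of positive order vanish. -/
theorem hasPowBound_of_succ (hT : IsHoloSG T) (h : HasPowBound T (k + 1) γ c z) (hγ : γ < k)
    (hk : k ≠ 0) : HasPowBound T k γ (c / (k - γ)) z := by
  intro t ht
  have he : γ - ((k + 1 : ℕ) : ℝ) < -1 := by push_cast; linarith
  have hexp : -(γ - ((k + 1 : ℕ) : ℝ)) - 1 = k - γ ∧ γ - ((k + 1 : ℕ) : ℝ) + 1 = γ - k := by
    push_cast; constructor <;> ring
  have hfar : ∀ R, t ≤ R →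
      ‖dualDeriv T k z t‖ ≤ ‖dualDeriv T k z R‖ + c / (k - γ) * t ^ (γ - k) := by
    intro R htR
    have hdiff := norm_sub_le_of_norm_deriv_le_rpow_of_lt ht htR
      (fun u hu => hT.hasDerivAt_dualDeriv z k (ht.trans_le hu.1))
      (fun u hu => h u (ht.trans_le hu.1)) he
    rw [hexp.1, hexp.2] at hdiff
    calc ‖dualDeriv T k z t‖
        ≤ ‖dualDeriv T k z R‖ + ‖dualDeriv T k z R - dualDeriv T k z t‖ := norm_le_insert _ _
      _ ≤ _ := add_le_add le_rfl hdiff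
  simpa using ge_of_tendsto ((hT.tendsto_norm_dualDeriv_atTop z hk).add_const
    (c / (k - γ) * t ^ (γ - k))) (eventually_ge_atTop t |>.mono hfar)

theorem exists_hasPowBound_of_hasPowBound (hT : IsHoloSG T) {k₀ k : ℕ} (hγ : γ < k)
    (hk : k ≠ 0) :
    ∃ c' : ℝ, 0 ≤ c' ∧ ∀ z c, HasPowBound T k₀ γ c z → HasPowBound T k γ (c' * c) z := by
  rcases le_total k₀ k with hle | hle
  · exact hT.exists_hasPowBound_of_le hle
  obtain ⟨d, rfl⟩ := Nat.exists_eq_add_of_le hle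
  induction d with
  | zero => exact ⟨1, zero_le_one, fun z c h => by simpa using h⟩
  | succ d ih =>
    obtain ⟨c', hc', hd⟩ := ih (by omega)
    have hγd : γ < (k + d : ℕ) := hγ.trans_le (by exact_mod_cast Nat.le_add_right k d)
    refine ⟨c' / ((k + d : ℕ) - γ), div_nonneg hc' (by linarith), fun z c h => ?_⟩
    have hstep := hT.hasPowBound_of_succ (k := k + d) h hγd (by omega)
    simpa [mul_div_assoc', div_mul_eq_mul_div] using hd z _ hstep

theorem exists_hasPowBound_of_exponent_le (hT : IsHoloSG T) {γ' : ℝ} (hγ' : 0 ≤ γ')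
    (hle : γ' ≤ γ) :
    ∃ C : ℝ, 0 ≤ C ∧ ∀ z c, HasPowBound T k γ c z → HasPowBound T k γ' (c + C * ‖z‖) z := by
  obtain ⟨C, hC0, hC⟩ := hT.exists_norm_dualDeriv_le
  refine ⟨C ^ (k + 1), by positivity, fun z c h t ht => ?_⟩
  have hc := h.nonneg
  have hCz : 0 ≤ C ^ (k + 1) * ‖z‖ := by positivity
  rcases le_total t 1 with ht1 | ht1
  · calc ‖dualDeriv T k z t‖ ≤ c * t ^ (γ - k) := h t ht
      _ ≤ c * t ^ (γ' - k) :=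
          mul_le_mul_of_nonneg_left (Real.rpow_le_rpow_of_exponent_ge ht ht1 (by linarith)) hc
      _ ≤ (c + C ^ (k + 1) * ‖z‖) * t ^ (γ' - k) := by gcongr; linarith
  · calc ‖dualDeriv T k z t‖ ≤ C ^ (k + 1) * ‖z‖ * t ^ (-(k : ℝ)) := hC k z t ht
      _ ≤ C ^ (k + 1) * ‖z‖ * t ^ (γ' - k) :=
          mul_le_mul_of_nonneg_left (Real.rpow_le_rpow_of_exponent_le ht1 (by linarith)) hCz
      _ ≤ (c + C ^ (k + 1) * ‖z‖) * t ^ (γ' - k) := by gcongr; linarith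

/-- The embedding `Λ^β ⊆ Λ^{β₀}`, quantitatively. -/
theorem exists_hasPowBound_of_memLambda (hT : IsHoloSG T) {β₀ : ℝ} (hβ₀ : 0 ≤ β₀)
    (hle : β₀ ≤ β) : ∃ c : ℝ, 0 ≤ c ∧
      ∀ z, MemLambda T β z → HasPowBound T (mExp β₀) β₀ (c * lambdaNorm T β z) z := by
  obtain ⟨C, hC0, hweak⟩ := hT.exists_hasPowBound_of_exponent_le (k := mExp β) hβ₀ hle
  obtain ⟨c', hc'0, horder⟩ :=
    hT.exists_hasPowBound_of_hasPowBound (k₀ := mExp β) (lt_mExp β₀) (mExp_ne_zero β₀)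
  refine ⟨c' * (1 + C), by positivity, fun z hz => ?_⟩
  have hbound := horder z _ (hweak z _ hz.hasPowBound_lambdaSeminorm)
  refine hbound.mono ?_
  rw [mul_assoc]
  gcongr
  have := norm_le_lambdaNorm_s17 (T := T) (β := β) (z := z)
  rw [lambdaNorm_eq_add] at this ⊢
  nlinarith [lambdaSeminorm_nonneg (T := T) (β := β) (z := z), norm_nonneg z]

end IsHoloSG

end PowerBounds

section KFunctional

variable {β₀ β₁ t : ℝ} {x : E →L[ℂ] ℂ}

theorem Kfun_nonneg (ht : 0 ≤ t) : 0 ≤ Kfun T β₀ β₁ t x :=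
  Real.sInf_nonneg <| by
    rintro _ ⟨x0, x1, -, -, -, rfl⟩
    exact add_nonneg lambdaNorm_nonneg (mul_nonneg ht lambdaNorm_nonneg)

theorem Kfun_le (ht : 0 ≤ t) {x0 x1 : E →L[ℂ] ℂ} (h0 : MemLambda T β₀ x0)
    (h1 : MemLambda T β₁ x1) (hx : x = x0 + x1) :
    Kfun T β₀ β₁ t x ≤ lambdaNorm T β₀ x0 + t * lambdaNorm T β₁ x1 := by
  refine csInf_le ⟨0, ?_⟩ ⟨x0, x1, h0, h1, hx, rfl⟩
  rintro _ ⟨y0, y1, -, -, -, rfl⟩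
  exact add_nonneg lambdaNorm_nonneg (mul_nonneg ht lambdaNorm_nonneg)

theorem Kfun_le_lambdaNorm (ht : 0 ≤ t) (hx : MemLambda T β₀ x) :
    Kfun T β₀ β₁ t x ≤ lambdaNorm T β₀ x := by
  simpa [lambdaNorm_zero] using Kfun_le ht hx memLambda_zero (add_zero x).symm

theorem le_mul_Kfun {a b : ℝ} (ha : 0 < a) (hx : MemLambda T β₀ x)
    (h : ∀ x0 x1, MemLambda T β₀ x0 → MemLambda T β₁ x1 → x = x0 + x1 →
      b ≤ a * (lambdaNorm T β₀ x0 + t * lambdaNorm T β₁ x1)) :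
    b ≤ a * Kfun T β₀ β₁ t x := by
  rw [← div_le_iff₀' ha]
  refine le_csInf ⟨_, x, 0, hx, memLambda_zero, (add_zero x).symm, rfl⟩ ?_
  rintro _ ⟨x0, x1, h0, h1, hsum, rfl⟩
  rw [div_le_iff₀' ha]
  exact h x0 x1 h0 h1 hsum

theorem norm_le_Kfun (ht : 1 ≤ t) (hx : MemLambda T β₀ x) : ‖x‖ ≤ Kfun T β₀ β₁ t x := by
  simpa using le_mul_Kfun (b := ‖x‖) one_pos hx fun x0 x1 _ _ hsum => by
    have h1 : lambdaNorm T β₁ x1 ≤ t * lambdaNorm T β₁ x1 :=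
      le_mul_of_one_le_left lambdaNorm_nonneg ht
    calc ‖x‖ ≤ ‖x0‖ + ‖x1‖ := hsum ▸ norm_add_le _ _
      _ ≤ 1 * (lambdaNorm T β₀ x0 + t * lambdaNorm T β₁ x1) := by
          linarith [norm_le_lambdaNorm_s17 (T := T) (β := β₀) (z := x0),
            norm_le_lambdaNorm_s17 (T := T) (β := β₁) (z := x1)]

namespace IsHoloSG

theorem exists_norm_dualDeriv_le_Kfun (hT : IsHoloSG T) (hβ : β₀ ≤ β₁) :
    ∃ c : ℝ, 0 < c ∧ ∀ x, MemLambda T β₀ x → ∀ s : ℝ, 0 < s →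
      ‖dualDeriv T (mExp β₁) x s‖ ≤ c * s ^ (β₀ - mExp β₁) * Kfun T β₀ β₁ (s ^ (β₁ - β₀)) x := by
  obtain ⟨c, -, hup⟩ := hT.exists_hasPowBound_of_le (γ := β₀) (mExp_mono hβ)
  refine ⟨max c 1, lt_max_of_lt_right one_pos, fun x hx s hs => le_mul_Kfun (by positivity) hx ?_⟩
  intro x0 x1 h0 h1 hsum
  have hsplit : s ^ (β₁ - mExp β₁) = s ^ (β₁ - β₀) * s ^ (β₀ - mExp β₁) := by
    rw [← Real.rpow_add hs]; ring_nf
  calc ‖dualDeriv T (mExp β₁) x s‖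
      ≤ ‖dualDeriv T (mExp β₁) x0 s‖ + ‖dualDeriv T (mExp β₁) x1 s‖ := by
        rw [hsum, hT.dualDeriv_add_left _ _ _ hs]; exact norm_add_le _ _
    _ ≤ c * lambdaNorm T β₀ x0 * s ^ (β₀ - mExp β₁) + lambdaNorm T β₁ x1 * s ^ (β₁ - mExp β₁) :=
        add_le_add (hup x0 _ h0.hasPowBound_lambdaNorm s hs) (h1.hasPowBound_lambdaNorm s hs)
    _ = (c * lambdaNorm T β₀ x0 + s ^ (β₁ - β₀) * lambdaNorm T β₁ x1) * s ^ (β₀ - mExp β₁) := by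
        rw [hsplit]; ring
    _ ≤ (max c 1 * lambdaNorm T β₀ x0 + max c 1 * (s ^ (β₁ - β₀) * lambdaNorm T β₁ x1))
          * s ^ (β₀ - mExp β₁) := by
        have hτN : 0 ≤ s ^ (β₁ - β₀) * lambdaNorm T β₁ x1 :=
          mul_nonneg (Real.rpow_nonneg hs.le _) lambdaNorm_nonneg
        refine mul_le_mul_of_nonneg_right (add_le_add ?_ ?_) (Real.rpow_nonneg hs.le _)
        · exact mul_le_mul_of_nonneg_right (le_max_left _ _) lambdaNorm_nonneg
        · exact le_mul_of_one_le_left hτN (le_max_right _ _)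
    _ = max c 1 * s ^ (β₀ - mExp β₁)
          * (lambdaNorm T β₀ x0 + s ^ (β₁ - β₀) * lambdaNorm T β₁ x1) := by
        ring

theorem exists_hasPowBound_of_Kfun_le (hT : IsHoloSG T) (hβ : β₀ ≤ β₁) (θ : ℝ) :
    ∃ c : ℝ, 0 ≤ c ∧ ∀ x M, MemLambda T β₀ x → (∀ t : ℝ, 0 < t → t ^ (-θ) * Kfun T β₀ β₁ t x ≤ M) →
      HasPowBound T (mExp ((1 - θ) * β₀ + θ * β₁)) ((1 - θ) * β₀ + θ * β₁) (c * M) x := by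
  set β := (1 - θ) * β₀ + θ * β₁ with hβdef
  obtain ⟨c₁, hc₁, hK⟩ := hT.exists_norm_dualDeriv_le_Kfun hβ
  obtain ⟨c, hc, horder⟩ :=
    hT.exists_hasPowBound_of_hasPowBound (k₀ := mExp β₁) (lt_mExp β) (mExp_ne_zero β)
  refine ⟨c * c₁, by positivity, fun x M hx hM => ?_⟩
  rw [mul_assoc]
  refine horder x _ fun s hs => ?_
  have hτ : 0 < s ^ (β₁ - β₀) := Real.rpow_pos_of_pos hs _
  have hKτ : Kfun T β₀ β₁ (s ^ (β₁ - β₀)) x ≤ (s ^ (β₁ - β₀)) ^ θ * M := by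
    have := hM _ hτ
    rwa [Real.rpow_neg hτ.le, inv_mul_le_iff₀ (Real.rpow_pos_of_pos hτ θ)] at this
  calc ‖dualDeriv T (mExp β₁) x s‖
      ≤ c₁ * s ^ (β₀ - mExp β₁) * Kfun T β₀ β₁ (s ^ (β₁ - β₀)) x := hK x hx s hs
    _ ≤ c₁ * s ^ (β₀ - mExp β₁) * ((s ^ (β₁ - β₀)) ^ θ * M) := by gcongr
    _ = c₁ * M * s ^ (β - mExp β₁) := by
        have hexp : s ^ (β₀ - mExp β₁) * s ^ ((β₁ - β₀) * θ) = s ^ (β - mExp β₁) := by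
          rw [← Real.rpow_add hs, hβdef]; ring_nf
        rw [← Real.rpow_mul hs.le, ← hexp]; ring

end IsHoloSG

end KFunctional

def dualDiff (T : ℝ → E →L[ℂ] E) (s : ℝ) (z : E →L[ℂ] ℂ) : E →L[ℂ] ℂ := z - z.comp (T s)

theorem norm_le_of_forall_norm_comp_le
    (hstrong : ∀ y : E, Tendsto (fun t => T t y) (𝓝[>] 0) (𝓝 y)) {z : E →L[ℂ] ℂ} {s B : ℝ}
    (hs : 0 < s) (h : ∀ t ∈ Ioo 0 s, ‖z.comp (T t)‖ ≤ B) : ‖z‖ ≤ B := by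
  have hB : 0 ≤ B := (norm_nonneg _).trans (h (s / 2) ⟨half_pos hs, half_lt_self hs⟩)
  refine ContinuousLinearMap.opNorm_le_bound _ hB fun y => ?_
  refine le_of_tendsto (((z.continuous.tendsto y).comp (hstrong y)).norm) ?_
  filter_upwards [Ioo_mem_nhdsGT hs] with t ht
  exact (z.comp (T t)).le_opNorm y |>.trans (by gcongr; exact h t ht)

section Differences

variable {k : ℕ} {s t c e : ℝ} {z : E →L[ℂ] ℂ}

namespace IsHoloSG

theorem dualDeriv_dualDiff (hT : IsHoloSG T) (z : E →L[ℂ] ℂ) (k : ℕ) (hs : 0 < s) (ht : 0 < t) :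
    dualDeriv T k (dualDiff T s z) t = dualDeriv T k z t - dualDeriv T k z (t + s) := by
  rw [dualDiff, hT.dualDeriv_sub_left _ _ _ ht, hT.dualDeriv_comp z k hs ht]

theorem dualDeriv_iterate_dualDiff_succ (hT : IsHoloSG T) (z : E →L[ℂ] ℂ) (k N : ℕ) (hs : 0 < s)
    (ht : 0 < t) : dualDeriv T k ((dualDiff T s)^[N + 1] z) t
      = dualDeriv T k ((dualDiff T s)^[N] z) t - dualDeriv T k ((dualDiff T s)^[N] z) (t + s) := by
  rw [Function.iterate_succ_apply', hT.dualDeriv_dualDiff _ k hs ht]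

/-- Each difference gains a factor `s` by the mean value theorem. -/
theorem norm_dualDeriv_iterate_dualDiff_le_of_le (hT : IsHoloSG T) (hs : 0 < s) {N : ℕ}
    (h : ∀ u, s ≤ u → ‖dualDeriv T (k + N) z u‖ ≤ c * u ^ e) (ht : s ≤ t) :
    ‖dualDeriv T k ((dualDiff T s)^[N] z) t‖ ≤ (2 ^ |e|) ^ N * c * s ^ N * t ^ e := by
  induction N generalizing k t with
  | zero => simpa using h t ht
  | succ N ih =>
    have ht0 : 0 < t := hs.trans_le ht
    have hc : 0 ≤ c := nonneg_of_mul_nonneg_left ((norm_nonneg _).trans (h s le_rfl))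
      (Real.rpow_pos_of_pos hs e)
    have hderiv : ∀ u ∈ Icc t (t + s), HasDerivWithinAt (dualDeriv T k ((dualDiff T s)^[N] z))
        (dualDeriv T (k + 1) ((dualDiff T s)^[N] z) u) (Icc t (t + s)) u :=
      fun u hu => (hT.hasDerivAt_dualDeriv _ k (ht0.trans_le hu.1)).hasDerivWithinAt
    have hbound : ∀ u ∈ Ico t (t + s), ‖dualDeriv T (k + 1) ((dualDiff T s)^[N] z) u‖
        ≤ (2 ^ |e|) ^ N * c * s ^ N * (2 ^ |e| * t ^ e) := by
      intro u hu
      calc ‖dualDeriv T (k + 1) ((dualDiff T s)^[N] z) u‖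
          ≤ (2 ^ |e|) ^ N * c * s ^ N * u ^ e :=
            ih (fun v hv => by rw [add_right_comm, add_assoc]; exact h v hv) (ht.trans hu.1)
        _ ≤ (2 ^ |e|) ^ N * c * s ^ N * (2 ^ |e| * t ^ e) := by
            gcongr
            exact rpow_le_two_rpow_abs_mul_rpow ht0 hu.1 (by linarith [hu.2])
    have hmvt := norm_image_sub_le_of_norm_deriv_le_segment' hderiv hbound (t + s)
      (right_mem_Icc.2 (by linarith))
    rw [hT.dualDeriv_iterate_dualDiff_succ z k N hs ht0, norm_sub_rev]
    calc _ ≤ (2 ^ |e|) ^ N * c * s ^ N * (2 ^ |e| * t ^ e) * (t + s - t) := hmvt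
      _ = (2 ^ |e|) ^ (N + 1) * c * s ^ (N + 1) * t ^ e := by ring

theorem norm_dualDeriv_iterate_dualDiff_le_of_neg (hT : IsHoloSG T) (hs : 0 < s) {N : ℕ} {R : ℝ}
    (he : e + N < 0) (h : ∀ u, 0 < u → u ≤ R → ‖dualDeriv T (k + N) z u‖ ≤ c * u ^ e)
    (ht : 0 < t) (htR : t + N * s ≤ R) :
    ‖dualDeriv T k ((dualDiff T s)^[N] z) t‖
      ≤ (∏ j ∈ Finset.range N, (-(e + j) - 1)⁻¹) * c * t ^ (e + N) := by
  induction N generalizing k t with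
  | zero => simpa using h t ht (by simpa using htR)
  | succ N ih =>
    push_cast at he htR
    have hbound : ∀ u ∈ Icc t (t + s), ‖dualDeriv T (k + 1) ((dualDiff T s)^[N] z) u‖
        ≤ (∏ j ∈ Finset.range N, (-(e + j) - 1)⁻¹) * c * u ^ (e + N) := fun u hu =>
      ih (by linarith) (fun v hv hvR => by rw [add_right_comm, add_assoc]; exact h v hv hvR)
        (ht.trans_le hu.1) (by linarith [hu.2])
    have hstep := norm_sub_le_of_norm_deriv_le_rpow_of_lt ht (by linarith)
      (fun u hu => hT.hasDerivAt_dualDeriv _ k (ht.trans_le hu.1)) hbound (by linarith)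
    rw [hT.dualDeriv_iterate_dualDiff_succ z k N hs ht, norm_sub_rev, Finset.prod_range_succ]
    convert hstep using 1
    push_cast
    ring_nf

theorem norm_dualDeriv_iterate_dualDiff_le (hT : IsHoloSG T) (hs : 0 < s) (he : e ≤ 0)
    (h : ∀ u, 0 < u → ‖dualDeriv T k z u‖ ≤ c * u ^ e) (N : ℕ) (ht : 0 < t) :
    ‖dualDeriv T k ((dualDiff T s)^[N] z) t‖ ≤ 2 ^ N * c * t ^ e := by
  induction N generalizing t with
  | zero => simpa using h t ht
  | succ N ih =>
    have hc : 0 ≤ c := nonneg_of_mul_nonneg_left ((norm_nonneg _).trans (h t ht))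
      (Real.rpow_pos_of_pos ht e)
    have hmono : (t + s) ^ e ≤ t ^ e := Real.rpow_le_rpow_of_nonpos ht (by linarith) he
    rw [hT.dualDeriv_iterate_dualDiff_succ z k N hs ht]
    calc _ ≤ 2 ^ N * c * t ^ e + 2 ^ N * c * (t + s) ^ e :=
          (norm_sub_le _ _).trans (add_le_add (ih ht) (ih (by linarith)))
      _ ≤ 2 ^ N * c * t ^ e + 2 ^ N * c * t ^ e := by gcongr
      _ = 2 ^ (N + 1) * c * t ^ e := by ring

theorem norm_dualDeriv_sub_iterate_dualDiff_le (hT : IsHoloSG T) (hs : 0 < s) (he : e ≤ 0)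
    (h : ∀ u, 0 < u → ‖dualDeriv T k z u‖ ≤ c * u ^ e) (N : ℕ) (ht : 0 < t) :
    ‖dualDeriv T k (z - (dualDiff T s)^[N] z) t‖ ≤ 2 ^ N * c * (t + s) ^ e := by
  induction N with
  | zero =>
    have hc : 0 ≤ c := nonneg_of_mul_nonneg_left ((norm_nonneg _).trans (h t ht))
      (Real.rpow_pos_of_pos ht e)
    simpa [dualDeriv_zero_left] using mul_nonneg hc (Real.rpow_nonneg (by linarith) e)
  | succ N ih =>
    have hsplit : z - (dualDiff T s)^[N + 1] z
        = (z - (dualDiff T s)^[N] z) + ((dualDiff T s)^[N] z).comp (T s) := by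
      rw [Function.iterate_succ_apply', dualDiff]; abel
    rw [hsplit, hT.dualDeriv_add_left _ _ _ ht, hT.dualDeriv_comp _ k hs ht]
    calc _ ≤ 2 ^ N * c * (t + s) ^ e + 2 ^ N * c * (t + s) ^ e :=
          (norm_add_le _ _).trans (add_le_add ih
            (hT.norm_dualDeriv_iterate_dualDiff_le hs he h N (by linarith)))
      _ = 2 ^ (N + 1) * c * (t + s) ^ e := by ring

end IsHoloSG

end Differences

section Decomposition

variable {n k : ℕ} {β γ S s : ℝ} {x : E →L[ℂ] ℂ}

namespace IsHoloSG

theorem norm_dualDeriv_iterate_dualDiff_le_of_hasPowBound_of_le (hT : IsHoloSG T)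
    (hx : HasPowBound T (k + n) β S x) (hβγ : β - γ ≤ n) (hs : 0 < s) {t : ℝ} (hst : s ≤ t) :
    ‖dualDeriv T k ((dualDiff T s)^[n] x) t‖
      ≤ (2 ^ |β - (k + n : ℕ)|) ^ n * S * s ^ (β - γ) * t ^ (γ - k) := by
  have hS := hx.nonneg
  calc _ ≤ (2 ^ |β - (k + n : ℕ)|) ^ n * S * s ^ n * t ^ (β - (k + n : ℕ)) :=
        hT.norm_dualDeriv_iterate_dualDiff_le_of_le hs (fun u hu => hx u (hs.trans_le hu)) hst
    _ = (2 ^ |β - (k + n : ℕ)|) ^ n * S * (s ^ n * t ^ ((β - γ) - n + (γ - k))) := by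
        push_cast; ring_nf
    _ ≤ (2 ^ |β - (k + n : ℕ)|) ^ n * S * (s ^ (β - γ) * t ^ (γ - k)) := by
        have hS2 : 0 ≤ (2 ^ |β - (k + n : ℕ)|) ^ n * S := by positivity
        exact mul_le_mul_of_nonneg_left (pow_mul_rpow_le_rpow_mul_rpow hs hst hβγ) hS2
    _ = _ := by ring

theorem norm_dualDeriv_iterate_dualDiff_le_of_hasPowBound_of_ge (hT : IsHoloSG T)
    (hx : HasPowBound T (k + n) β S x) (hγβ : γ ≤ β) (hγk : γ < k) (hs : 0 < s) {t : ℝ}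
    (ht : 0 < t) (hts : t ≤ s) :
    ‖dualDeriv T k ((dualDiff T s)^[n] x) t‖
      ≤ (∏ j ∈ Finset.range n, (-(γ - (k + n : ℕ) + j) - 1)⁻¹) * ((n + 1) ^ (β - γ) * S)
        * s ^ (β - γ) * t ^ (γ - k) := by
  set R := (n + 1) * s
  -- on `(0, R]` trade the exponent `β` for `γ`, so that the bound can be integrated `n` times
  have hxR : ∀ u, 0 < u → u ≤ R → ‖dualDeriv T (k + n) x u‖
      ≤ S * R ^ (β - γ) * u ^ (γ - (k + n : ℕ)) := fun u hu huR =>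
    calc _ ≤ S * u ^ ((β - γ) + (γ - (k + n : ℕ))) := by rw [sub_add_sub_cancel]; exact hx u hu
      _ ≤ S * (R ^ (β - γ) * u ^ (γ - (k + n : ℕ))) := by
          gcongr
          · exact hx.nonneg
          · exact rpow_add_le_rpow_mul_rpow hu huR (by linarith)
      _ = _ := by ring
  have h := hT.norm_dualDeriv_iterate_dualDiff_le_of_neg hs (N := n) (by push_cast; linarith)
    hxR ht (by linarith)
  rw [show γ - ((k + n : ℕ) : ℝ) + n = γ - k by push_cast; ring,
    Real.mul_rpow (by positivity) hs.le] at h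
  linarith

theorem exists_hasPowBound_iterate_dualDiff (hT : IsHoloSG T) (hβn : β < n) (hγ : 0 ≤ γ)
    (hγβ : γ ≤ β) (hγk : γ < k) : ∃ c : ℝ, 0 ≤ c ∧ ∀ x S, HasPowBound T n β S x → ∀ s, 0 < s →
      HasPowBound T k γ (c * S * s ^ (β - γ)) ((dualDiff T s)^[n] x) := by
  obtain ⟨cu, hcu, hup⟩ := hT.exists_hasPowBound_of_le (γ := β) (Nat.le_add_left n k)
  set cQ := ((2 : ℝ) ^ |β - (k + n : ℕ)|) ^ n
  set cP := (∏ j ∈ Finset.range n, (-(γ - (k + n : ℕ) + j) - 1)⁻¹) * (n + 1) ^ (β - γ)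
  have hcP : 0 ≤ cP := by
    refine mul_nonneg (Finset.prod_nonneg fun j hj => inv_nonneg.2 ?_) (by positivity)
    have : (j : ℝ) + 1 ≤ n := by exact_mod_cast Finset.mem_range.1 hj
    push_cast; linarith
  refine ⟨(cQ + cP) * cu, by positivity, fun x S hx s hs t ht => ?_⟩
  have hxup := hup x S hx
  have hS : 0 ≤ cu * S := hxup.nonneg
  have hst : 0 ≤ s ^ (β - γ) * t ^ (γ - k) := by positivity
  rcases le_total s t with hst' | hts
  · calc _ ≤ cQ * (cu * S) * s ^ (β - γ) * t ^ (γ - k) :=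
          hT.norm_dualDeriv_iterate_dualDiff_le_of_hasPowBound_of_le (γ := γ) hxup (by linarith) hs
            hst'
      _ ≤ _ := by nlinarith [mul_nonneg hcP (mul_nonneg hS hst)]
  · calc _ ≤ _ := hT.norm_dualDeriv_iterate_dualDiff_le_of_hasPowBound_of_ge hxup hγβ hγk hs ht hts
      _ ≤ _ := by nlinarith [mul_nonneg (by positivity : (0 : ℝ) ≤ cQ) (mul_nonneg hS hst)]

theorem exists_norm_iterate_dualDiff_le (hT : IsHoloSG T) (hβ : 0 < β) (hβn : β < n) :
    ∃ c : ℝ, 0 ≤ c ∧ ∀ x S, HasPowBound T n β S x → ∀ s, 0 < s →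
      ‖(dualDiff T s)^[n] x‖ ≤ c * S * s ^ β := by
  obtain ⟨ε, hε, hεβ, hε1⟩ : ∃ ε : ℝ, 0 < ε ∧ ε ≤ β ∧ ε < 1 :=
    ⟨min β 1 / 2, by positivity, by linarith [min_le_left β 1], by linarith [min_le_right β 1]⟩
  obtain ⟨c₁, hc₁, hderiv⟩ :=
    hT.exists_hasPowBound_iterate_dualDiff (k := 1) hβn hε.le hεβ (by exact_mod_cast hε1)
  refine ⟨(2 ^ |β - n|) ^ n + c₁ / ε, by positivity, fun x S hx s hs => ?_⟩
  have hS := hx.nonneg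
  -- the value at `t = s` is controlled directly, and `D¹` is integrable down to `t = 0`
  have hat_s := hT.norm_dualDeriv_iterate_dualDiff_le_of_hasPowBound_of_le (k := 0) (γ := 0)
    (by simpa using hx) (by linarith) hs le_rfl
  have hfrom_s : ∀ t ∈ Ioo 0 s, ‖dualDeriv T 0 ((dualDiff T s)^[n] x) s
      - dualDeriv T 0 ((dualDiff T s)^[n] x) t‖ ≤ c₁ * S * s ^ (β - ε) / ε * s ^ ε := by
    intro t ht
    have h := norm_sub_le_of_norm_deriv_le_rpow_of_gt ht.1 ht.2.le
      (fun u hu => hT.hasDerivAt_dualDeriv _ 0 (ht.1.trans_le hu.1))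
      (fun u hu => hderiv x S hx s hs u (ht.1.trans_le hu.1)) (by push_cast; linarith)
    simpa using h
  apply norm_le_of_forall_norm_comp_le hT.strong hs
  intro t ht
  have hrpow : s ^ (β - ε) * s ^ ε = s ^ β := by rw [← Real.rpow_add hs, sub_add_cancel]
  calc ‖((dualDiff T s)^[n] x).comp (T t)‖ = ‖dualDeriv T 0 ((dualDiff T s)^[n] x) t‖ := by
        simp [dualDeriv]
    _ ≤ ‖dualDeriv T 0 ((dualDiff T s)^[n] x) s‖ + c₁ * S * s ^ (β - ε) / ε * s ^ ε :=
        (norm_le_insert _ _).trans (add_le_add le_rfl (hfrom_s t ht))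
    _ ≤ (2 ^ |β - n|) ^ n * S * s ^ β + c₁ * S * s ^ (β - ε) / ε * s ^ ε := by
        gcongr; simpa using hat_s
    _ = ((2 ^ |β - n|) ^ n + c₁ / ε) * S * s ^ β := by rw [← hrpow]; ring

theorem exists_hasPowBound_sub_iterate_dualDiff (hT : IsHoloSG T) (N : ℕ) (hβγ : β ≤ γ)
    (hγk : γ ≤ k) (hnk : n ≤ k) : ∃ c : ℝ, 0 ≤ c ∧ ∀ x S, HasPowBound T n β S x → ∀ s, 0 < s →
      HasPowBound T k γ (c * S * s ^ (β - γ)) (x - (dualDiff T s)^[N] x) := by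
  obtain ⟨cu, hcu, hup⟩ := hT.exists_hasPowBound_of_le (γ := β) hnk
  refine ⟨2 ^ N * cu, by positivity, fun x S hx s hs t ht => ?_⟩
  have hxup := hup x S hx
  calc _ ≤ 2 ^ N * (cu * S) * (t + s) ^ ((β - γ) + (γ - k)) := by
        rw [sub_add_sub_cancel]
        exact hT.norm_dualDeriv_sub_iterate_dualDiff_le hs (by linarith) hxup N ht
    _ ≤ 2 ^ N * (cu * S) * (s ^ (β - γ) * t ^ (γ - k)) := by
        have := hxup.nonneg
        gcongr
        exact add_rpow_add_le_rpow_mul_rpow hs ht (by linarith) (by linarith)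
    _ = _ := by ring

theorem exists_lambdaNorm_iterate_dualDiff_le (hT : IsHoloSG T) {β₀ : ℝ} (hβ₀ : 0 < β₀)
    (h0 : β₀ < β) : ∃ c : ℝ, 0 ≤ c ∧ ∀ x, MemLambda T β x → ∀ s ∈ Ioc (0 : ℝ) 1,
      MemLambda T β₀ ((dualDiff T s)^[mExp β] x) ∧
      lambdaNorm T β₀ ((dualDiff T s)^[mExp β] x) ≤ c * lambdaNorm T β x * s ^ (β - β₀) := by
  obtain ⟨cA, hcA, hA⟩ := hT.exists_hasPowBound_iterate_dualDiff (k := mExp β₀) (lt_mExp β)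
    hβ₀.le h0.le (lt_mExp β₀)
  obtain ⟨cB, hcB, hB⟩ := hT.exists_norm_iterate_dualDiff_le (hβ₀.trans h0) (lt_mExp β)
  refine ⟨cB + cA, by positivity, fun x hx s hs => ?_⟩
  have hbound := hA x _ hx.hasPowBound_lambdaNorm s hs.1
  have hsβ : s ^ β ≤ s ^ (β - β₀) := Real.rpow_le_rpow_of_exponent_ge hs.1 hs.2 (by linarith)
  have hL : 0 ≤ cB * lambdaNorm T β x := mul_nonneg hcB lambdaNorm_nonneg
  refine ⟨⟨_, hbound⟩, (lambdaNorm_le hbound).trans ?_⟩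
  calc _ ≤ cB * lambdaNorm T β x * s ^ β + cA * lambdaNorm T β x * s ^ (β - β₀) :=
        add_le_add (hB x _ hx.hasPowBound_lambdaNorm s hs.1) le_rfl
    _ ≤ cB * lambdaNorm T β x * s ^ (β - β₀) + cA * lambdaNorm T β x * s ^ (β - β₀) := by
        gcongr
    _ = _ := by ring

theorem exists_lambdaNorm_sub_iterate_dualDiff_le (hT : IsHoloSG T) {β₁ : ℝ} (hβ : 0 < β)
    (h1 : β ≤ β₁) : ∃ c : ℝ, 0 ≤ c ∧ ∀ x, MemLambda T β x → ∀ s ∈ Ioc (0 : ℝ) 1,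
      MemLambda T β₁ (x - (dualDiff T s)^[mExp β] x) ∧
      lambdaNorm T β₁ (x - (dualDiff T s)^[mExp β] x) ≤ c * lambdaNorm T β x * s ^ (β - β₁) := by
  obtain ⟨cC, hcC, hC⟩ := hT.exists_hasPowBound_sub_iterate_dualDiff (mExp β) h1
    (lt_mExp β₁).le (mExp_mono h1)
  obtain ⟨cB, hcB, hB⟩ := hT.exists_norm_iterate_dualDiff_le hβ (lt_mExp β)
  refine ⟨1 + cB + cC, by positivity, fun x hx s hs => ?_⟩
  have hbound := hC x _ hx.hasPowBound_lambdaNorm s hs.1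
  have hsβ : s ^ β ≤ 1 := Real.rpow_le_one hs.1.le hs.2 hβ.le
  have hsβ₁ : 1 ≤ s ^ (β - β₁) :=
    Real.one_le_rpow_of_pos_of_le_one_of_nonpos hs.1 hs.2 (by linarith)
  have hL : 0 ≤ lambdaNorm T β x := lambdaNorm_nonneg
  refine ⟨⟨_, hbound⟩, (lambdaNorm_le hbound).trans ?_⟩
  have hnorm : ‖x - (dualDiff T s)^[mExp β] x‖ ≤ (1 + cB) * lambdaNorm T β x * s ^ (β - β₁) :=
    calc _ ≤ ‖x‖ + ‖(dualDiff T s)^[mExp β] x‖ := norm_sub_le _ _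
      _ ≤ lambdaNorm T β x + cB * lambdaNorm T β x * 1 :=
          add_le_add norm_le_lambdaNorm_s17
            ((hB x _ hx.hasPowBound_lambdaNorm s hs.1).trans (by gcongr))
      _ = (1 + cB) * lambdaNorm T β x * 1 := by ring
      _ ≤ _ := by gcongr
  linarith

theorem exists_Kfun_rpow_le (hT : IsHoloSG T) {β₀ β₁ : ℝ} (hβ₀ : 0 < β₀) (h0 : β₀ < β)
    (h1 : β ≤ β₁) : ∃ c : ℝ, 0 ≤ c ∧ ∀ x, MemLambda T β x → ∀ s ∈ Ioc (0 : ℝ) 1,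
      Kfun T β₀ β₁ (s ^ (β₁ - β₀)) x ≤ c * lambdaNorm T β x * s ^ (β - β₀) := by
  obtain ⟨c₀, hc₀, h₀⟩ := hT.exists_lambdaNorm_iterate_dualDiff_le hβ₀ h0
  obtain ⟨c₁, hc₁, h₁⟩ := hT.exists_lambdaNorm_sub_iterate_dualDiff_le (hβ₀.trans h0) h1
  refine ⟨c₀ + c₁, by positivity, fun x hx s hs => ?_⟩
  obtain ⟨hx₀, hN₀⟩ := h₀ x hx s hs
  obtain ⟨hx₁, hN₁⟩ := h₁ x hx s hs
  have hτ : 0 ≤ s ^ (β₁ - β₀) := Real.rpow_nonneg hs.1.le _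
  have hexp : s ^ (β₁ - β₀) * s ^ (β - β₁) = s ^ (β - β₀) := by
    rw [← Real.rpow_add hs.1]; ring_nf
  calc _ ≤ lambdaNorm T β₀ ((dualDiff T s)^[mExp β] x)
        + s ^ (β₁ - β₀) * lambdaNorm T β₁ (x - (dualDiff T s)^[mExp β] x) :=
        Kfun_le hτ hx₀ hx₁ (add_sub_cancel _ _).symm
    _ ≤ c₀ * lambdaNorm T β x * s ^ (β - β₀)
        + s ^ (β₁ - β₀) * (c₁ * lambdaNorm T β x * s ^ (β - β₁)) := by gcongr
    _ = _ := by rw [← hexp]; ring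

theorem exists_rpow_mul_Kfun_le (hT : IsHoloSG T) {β₀ β₁ θ : ℝ} (hβ₀ : 0 < β₀) (hβ : β₀ < β₁)
    (hθ0 : 0 < θ) (hθ1 : θ < 1) : ∃ c : ℝ, 0 ≤ c ∧ ∀ x, MemLambda T ((1 - θ) * β₀ + θ * β₁) x →
      MemLambda T β₀ x ∧ ∀ t : ℝ, 0 < t →
        t ^ (-θ) * Kfun T β₀ β₁ t x ≤ c * lambdaNorm T ((1 - θ) * β₀ + θ * β₁) x := by
  set β := (1 - θ) * β₀ + θ * β₁ with hβdef
  obtain ⟨ce, hce, hemb⟩ := hT.exists_hasPowBound_of_memLambda hβ₀.le (by nlinarith : β₀ ≤ β)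
  obtain ⟨cK, hcK, hK⟩ :=
    hT.exists_Kfun_rpow_le hβ₀ (by nlinarith : β₀ < β) (by nlinarith : β ≤ β₁)
  refine ⟨max (1 + ce) cK, by positivity, fun x hx => ⟨⟨_, hemb x hx⟩, fun t ht => ?_⟩⟩
  have hL : 0 ≤ lambdaNorm T β x := lambdaNorm_nonneg
  rcases le_total 1 t with ht1 | ht1
  · calc t ^ (-θ) * Kfun T β₀ β₁ t x ≤ 1 * lambdaNorm T β₀ x := by
          gcongr
          · exact Kfun_nonneg ht.le
          · exact Real.rpow_le_one_of_one_le_of_nonpos ht1 (by linarith)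
          · exact Kfun_le_lambdaNorm ht.le ⟨_, hemb x hx⟩
      _ ≤ (1 + ce) * lambdaNorm T β x := by
          rw [one_mul]
          have := norm_le_lambdaNorm_s17 (T := T) (β := β) (z := x)
          exact (lambdaNorm_le (hemb x hx)).trans (by nlinarith)
      _ ≤ _ := by gcongr; exact le_max_left _ _
  · -- the scale `s` with `s^{β₁-β₀} = t` turns the decomposition estimate into `K(t) ≲ t^θ`
    set s := t ^ (β₁ - β₀)⁻¹
    have hs : s ∈ Ioc (0 : ℝ) 1 :=
      ⟨Real.rpow_pos_of_pos ht _, Real.rpow_le_one ht.le ht1 (inv_nonneg.2 (by linarith))⟩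
    have hst : s ^ (β₁ - β₀) = t := by
      rw [← Real.rpow_mul ht.le, inv_mul_cancel₀ (by linarith), Real.rpow_one]
    have hsθ : s ^ (β - β₀) = t ^ θ := by
      rw [← hst, ← Real.rpow_mul hs.1.le, hβdef]; ring_nf
    calc t ^ (-θ) * Kfun T β₀ β₁ t x ≤ t ^ (-θ) * (cK * lambdaNorm T β x * t ^ θ) := by
          gcongr; simpa [hst, hsθ] using hK x hx s hs
      _ = cK * lambdaNorm T β x := by
          rw [mul_comm, mul_assoc, ← Real.rpow_add ht, add_neg_cancel, Real.rpow_zero, mul_one]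
      _ ≤ _ := by gcongr; exact le_max_right _ _

theorem exists_lambdaNorm_le_iSup (hT : IsHoloSG T) {β₀ β₁ : ℝ} (hβ : β₀ ≤ β₁) (θ : ℝ) :
    ∃ c : ℝ, 0 ≤ c ∧ ∀ x, MemLambda T β₀ x →
      BddAbove (range fun t : Ioi (0 : ℝ) => (t : ℝ) ^ (-θ) * Kfun T β₀ β₁ t x) →
      lambdaNorm T ((1 - θ) * β₀ + θ * β₁) x
        ≤ c * ⨆ t : Ioi (0 : ℝ), (t : ℝ) ^ (-θ) * Kfun T β₀ β₁ t x := by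
  obtain ⟨c, hc, hrev⟩ := hT.exists_hasPowBound_of_Kfun_le hβ θ
  refine ⟨1 + c, by positivity, fun x hx hbdd => ?_⟩
  have hle : ∀ t : ℝ, 0 < t →
      t ^ (-θ) * Kfun T β₀ β₁ t x ≤ ⨆ t : Ioi (0 : ℝ), (t : ℝ) ^ (-θ) * Kfun T β₀ β₁ t x :=
    fun t ht => le_ciSup hbdd (⟨t, ht⟩ : Ioi (0 : ℝ))
  have hnorm : ‖x‖ ≤ ⨆ t : Ioi (0 : ℝ), (t : ℝ) ^ (-θ) * Kfun T β₀ β₁ t x := by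
    simpa using (norm_le_Kfun le_rfl hx).trans (by simpa using hle 1 one_pos)
  calc _ ≤ ‖x‖ + c * ⨆ t : Ioi (0 : ℝ), (t : ℝ) ^ (-θ) * Kfun T β₀ β₁ t x :=
        lambdaNorm_le (hrev x _ hx hle)
    _ ≤ _ := by linarith

end IsHoloSG

end Decomposition

end Semigroup

/-- for `0 < β₀ < β₁`, `0 < θ < 1` and `β = (1−θ)β₀ + θβ₁`, the
interpolation space `(Λ_A^{β₀}, Λ_A^{β₁})_θ` obtained by the K-method of Peetre
(i.e. the set of `x* ∈ Λ_A^{β₀}` with `sup_{t>0} t^{−θ} K(t,x*) < ∞`) coincides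
with `Λ_A^β`, and the interpolation norm `‖x*‖_θ = sup_{t>0} t^{−θ} K(t,x*)` is
equivalent to `‖x*‖_{Λ_A^β}`. -/
theorem stmt17 (T : ℝ → X →L[ℂ] X) (hT : IsHoloSG T)
    (β₀ β₁ θ : ℝ) (hβ₀ : 0 < β₀) (hβ : β₀ < β₁) (hθ0 : 0 < θ) (hθ1 : θ < 1) :
    (∀ xs : X →L[ℂ] ℂ,
      (MemLambda T β₀ xs ∧
        ∃ M : ℝ, ∀ t : ℝ, 0 < t → t ^ (-θ) * Kfun T β₀ β₁ t xs ≤ M)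
      ↔ MemLambda T ((1 - θ) * β₀ + θ * β₁) xs) ∧
    ∃ C : ℝ, 1 < C ∧ ∀ xs : X →L[ℂ] ℂ,
      MemLambda T ((1 - θ) * β₀ + θ * β₁) xs →
      C⁻¹ * lambdaNorm T ((1 - θ) * β₀ + θ * β₁) xs
          ≤ (⨆ t : Set.Ioi (0:ℝ), (t : ℝ) ^ (-θ) * Kfun T β₀ β₁ t xs) ∧
      (⨆ t : Set.Ioi (0:ℝ), (t : ℝ) ^ (-θ) * Kfun T β₀ β₁ t xs)
          ≤ C * lambdaNorm T ((1 - θ) * β₀ + θ * β₁) xs := by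
  obtain ⟨cf, hcf, hfwd⟩ := hT.exists_rpow_mul_Kfun_le hβ₀ hβ hθ0 hθ1
  obtain ⟨cr, hcr, hrev⟩ := hT.exists_hasPowBound_of_Kfun_le hβ.le θ
  obtain ⟨cl, hcl, hlow⟩ := hT.exists_lambdaNorm_le_iSup hβ.le θ
  refine ⟨fun x => ⟨fun ⟨hx₀, M, hM⟩ => ⟨cr * M, hrev x M hx₀ hM⟩,
    fun hx => ⟨(hfwd x hx).1, _, (hfwd x hx).2⟩⟩, max cf cl + 2,
    by linarith [le_max_left cf cl], fun x hx => ?_⟩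
  obtain ⟨hx₀, hK⟩ := hfwd x hx
  have hbdd : BddAbove (range fun t : Ioi (0 : ℝ) => (t : ℝ) ^ (-θ) * Kfun T β₀ β₁ t x) :=
    ⟨_, by rintro _ ⟨t, rfl⟩; exact hK t t.2⟩
  have hsup : (⨆ t : Ioi (0 : ℝ), (t : ℝ) ^ (-θ) * Kfun T β₀ β₁ t x)
      ≤ cf * lambdaNorm T ((1 - θ) * β₀ + θ * β₁) x := ciSup_le fun t => hK t t.2
  have hL : 0 ≤ lambdaNorm T ((1 - θ) * β₀ + θ * β₁) x := lambdaNorm_nonneg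
  have hQ : 0 ≤ ⨆ t : Ioi (0 : ℝ), (t : ℝ) ^ (-θ) * Kfun T β₀ β₁ t x :=
    Real.iSup_nonneg fun t => mul_nonneg (Real.rpow_nonneg t.2.le _) (Kfun_nonneg t.2.le)
  refine ⟨(inv_mul_le_iff₀ (by positivity)).2 ((hlow x hx₀ hbdd).trans ?_), hsup.trans ?_⟩
  · exact mul_le_mul_of_nonneg_right (by linarith [le_max_right cf cl]) hQ
  · exact mul_le_mul_of_nonneg_right (by linarith [le_max_left cf cl]) hL
end
end
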